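/- arXiv:2106.13413 — 13 statements merged into one kernel-verified Lean document; each statement's English description precedes it below -/
import Mathlib

section
/- Let E be a real Banach space and K ⊆ E a compact subset. Then there exists a sequence (xₙ) in E converging to 0 such that K is contained in the closed convex hull of the set {xₙ : n ∈ ℕ}. -/
/-!
Grothendieck's argument. Cover `K = K₀` by finitely many balls of radius `δ₀` centred at a finite
`F₀ ⊆ K₀`; the differences `p - y` (`p ∈ K₀`, `y ∈ F₀`, `‖p - y‖ ≤ δ₀`) form a compact `K₁`, and
iterating gives `Kₙ ⊆ Fₙ + Kₙ₊₁` with `Kₙ₊₁` in the ball of radius `δₙ`. Hence every point of `K`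
lies in `∑_{i<n} Fᵢ + Kₙ`, and `∑_{i<n} yᵢ = ∑_{i<n} 2^{-(i+1)} • (2^{i+1} • yᵢ)` is a convex
combination of `0` and the points of `Gᵢ = 2^{i+1} • Fᵢ`. For `δₙ = 4^{-(n+2)}` these finite sets
shrink to `0`, so an enumeration of `{0} ∪ ⋃ Gᵢ` block by block is a null sequence.
-/

open Filter Metric Set Topology Function
open scoped Pointwise

theorem Set.Finite.exists_range_eq_insert_eventually_eq {X : Type*} {s : Set X} (hs : s.Finite)
    (a : X) : ∃ e : ℕ → X, range e = insert a s ∧ ∀ᶠ k in atTop, e k = a := by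
  classical
  set l := hs.toFinset.toList
  have hl : ∀ v, v ∈ l ↔ v ∈ s := by simp [l]
  refine ⟨fun k => l.getD k a, ?_,
    eventually_atTop.2 ⟨l.length, fun k hk => l.getD_eq_default a hk⟩⟩
  ext v
  simp only [mem_range, mem_insert_iff]
  constructor
  · rintro ⟨k, rfl⟩
    rcases lt_or_ge k l.length with hk | hk
    · rw [l.getD_eq_getElem a hk]
      exact Or.inr ((hl _).1 (l.getElem_mem hk))
    · exact Or.inl (l.getD_eq_default a hk)
  · rintro (rfl | hv)
    · exact ⟨l.length, l.getD_eq_default _ le_rfl⟩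
    · obtain ⟨k, hk, rfl⟩ := List.mem_iff_getElem.1 ((hl v).2 hv)
      exact ⟨k, l.getD_eq_getElem a hk⟩

theorem exists_seq_tendsto_insert_iUnion_subset_range {X : Type*} [TopologicalSpace X] {a : X}
    {G : ℕ → Set X} (hfin : ∀ n, (G n).Finite) (hG : Tendsto G atTop (𝓝 a).smallSets) :
    ∃ x : ℕ → X, Tendsto x atTop (𝓝 a) ∧ insert a (⋃ n, G n) ⊆ range x := by
  choose e he_range he_ev using fun n => (hfin n).exists_range_eq_insert_eventually_eq a
  have he : Tendsto (uncurry e) cofinite (𝓝 a) := by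
    intro U hU
    obtain ⟨N, hN⟩ := eventually_atTop.1 (tendsto_smallSets_iff.1 hG U hU)
    have hbad : ∀ n, {k | e n k ≠ a}.Finite := fun n => by
      simpa [← Nat.cofinite_eq_atTop] using he_ev n
    refine ((finite_Iio N).prod (finite_Iio N |>.biUnion fun n _ => hbad n)).subset ?_
    rintro ⟨n, k⟩ hnk
    have hne : e n k ≠ a := fun h => hnk (by simpa [h] using mem_of_mem_nhds hU)
    have hn : n < N := by
      by_contra! hn
      have : e n k ∈ insert a (G n) := he_range n ▸ mem_range_self k
      rcases this with h | h
      · exact hne h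
      · exact hnk (hN n hn h)
    exact ⟨hn, mem_biUnion hn hne⟩
  refine ⟨fun m => uncurry e m.unpair, ?_, ?_⟩
  · rw [← Nat.cofinite_eq_atTop]
    exact he.comp Nat.pairEquiv.symm.injective.tendsto_cofinite
  · intro v hv
    obtain ⟨n, hn⟩ : ∃ n, v ∈ insert a (G n) := by
      rcases hv with rfl | hv
      · exact ⟨0, mem_insert _ _⟩
      · obtain ⟨n, hn⟩ := mem_iUnion.1 hv
        exact ⟨n, mem_insert_of_mem a hn⟩
    rw [← he_range n] at hn
    obtain ⟨k, rfl⟩ := hn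
    exact ⟨Nat.pair n k, by simp⟩

theorem subset_closure_of_eventually_subset_add {G ι : Type*} [TopologicalSpace G] [AddGroup G]
    [IsTopologicalAddGroup G] {l : Filter ι} [l.NeBot] {s t : Set G} {C : ι → Set G}
    (hC : Tendsto C l (𝓝 0).smallSets) (h : ∀ᶠ i in l, t ⊆ s + C i) : t ⊆ closure s := by
  intro p hp
  rw [mem_closure_iff_nhds]
  intro U hU
  have hV : (fun c => p - c) ⁻¹' U ∈ 𝓝 0 :=
    (continuous_const.sub continuous_id).continuousAt.preimage_mem_nhds (by simpa using hU)
  obtain ⟨i, hCi, hi⟩ := ((tendsto_smallSets_iff.1 hC _ hV).and h).exists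
  obtain ⟨q, hq, c, hc, rfl⟩ := hi hp
  exact ⟨q, by simpa using hCi hc, hq⟩

theorem Metric.tendsto_smallSets_of_succ_subset_closedBall {X : Type*} [PseudoMetricSpace X]
    {a : X} {C : ℕ → Set X} {r : ℕ → ℝ} (hr : Tendsto r atTop (𝓝 0))
    (hC : ∀ n, C (n + 1) ⊆ closedBall a (r n)) : Tendsto C atTop (𝓝 a).smallSets := by
  rw [← tendsto_add_atTop_iff_nat 1]
  exact ((tendsto_closedBall_smallSets a).comp hr).smallSets_mono (Eventually.of_forall hC)

theorem Set.subset_sum_range_add {M : Type*} [AddCommMonoid M] {F C : ℕ → Set M}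
    (h : ∀ n, C n ⊆ F n + C (n + 1)) (n : ℕ) : C 0 ⊆ (∑ i ∈ Finset.range n, F i) + C n := by
  induction n with
  | zero => simp
  | succ n ih =>
    calc C 0 ⊆ (∑ i ∈ Finset.range n, F i) + (F n + C (n + 1)) :=
          ih.trans (add_subset_add_left (h n))
      _ = (∑ i ∈ Finset.range (n + 1), F i) + C (n + 1) := by
          rw [Finset.sum_range_succ, add_assoc]

section Convex

variable {𝕜 E ι : Type*} [Field 𝕜] [LinearOrder 𝕜] [IsStrictOrderedRing 𝕜] [AddCommGroup E]
  [Module 𝕜 E]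

theorem Convex.sum_smul_mem_of_zero_mem {s : Set E} (hs : Convex 𝕜 s) (h0 : (0 : E) ∈ s)
    {t : Finset ι} {w : ι → 𝕜} {z : ι → E} (hw0 : ∀ i ∈ t, 0 ≤ w i)
    (hw1 : ∑ i ∈ t, w i ≤ 1) (hz : ∀ i ∈ t, z i ∈ s) : ∑ i ∈ t, w i • z i ∈ s := by
  rcases (Finset.sum_nonneg hw0).eq_or_lt with hW | hW
  · have hw : ∀ i ∈ t, w i = 0 := (Finset.sum_eq_zero_iff_of_nonneg hw0).1 hW.symm
    rw [Finset.sum_eq_zero fun i hi => by rw [hw i hi, zero_smul]]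
    exact h0
  · have hmass : t.centerMass w z ∈ s := hs.centerMass_mem hw0 hW hz
    have hsum : ∑ i ∈ t, w i • z i = (∑ i ∈ t, w i) • t.centerMass w z := by
      rw [Finset.centerMass, smul_inv_smul₀ hW.ne']
    rw [hsum]
    exact hs.smul_mem_of_zero_mem h0 hmass ⟨hW.le, hw1⟩

theorem Convex.sum_smul_subset_of_zero_mem {s : Set E} (hs : Convex 𝕜 s) (h0 : (0 : E) ∈ s)
    {t : Finset ι} {w : ι → 𝕜} {G : ι → Set E} (hw0 : ∀ i ∈ t, 0 ≤ w i)
    (hw1 : ∑ i ∈ t, w i ≤ 1) (hG : ∀ i ∈ t, G i ⊆ s) : ∑ i ∈ t, w i • G i ⊆ s := by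
  intro v hv
  obtain ⟨g, hg, rfl⟩ := (Set.mem_finsetSum t _ v).1 hv
  choose! z hz hgz using fun i (hi : i ∈ t) => mem_smul_set.1 (hg hi)
  rw [Finset.sum_congr rfl fun i hi => (hgz i hi).symm]
  exact hs.sum_smul_mem_of_zero_mem h0 hw0 hw1 fun i hi => hG i hi (hz i hi)

theorem subset_convexHull_add_of_subset_add {s : Set E} {F C : ℕ → Set E} {w : ℕ → 𝕜}
    (hw0 : ∀ n, 0 < w n) (hw1 : ∀ n, ∑ i ∈ Finset.range n, w i ≤ 1)
    (hs : insert 0 (⋃ n, (w n)⁻¹ • F n) ⊆ s) (hCF : ∀ n, C n ⊆ F n + C (n + 1)) (n : ℕ) :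
    C 0 ⊆ convexHull 𝕜 s + C n := by
  have hF : ∀ i, F i = w i • (w i)⁻¹ • F i := fun i =>
    (smul_inv_smul₀ (hw0 i).ne' (F i)).symm
  have hsum : ∑ i ∈ Finset.range n, F i ⊆ convexHull 𝕜 s := by
    rw [Finset.sum_congr rfl fun i _ => hF i]
    refine (convex_convexHull 𝕜 s).sum_smul_subset_of_zero_mem
      (subset_convexHull 𝕜 s (hs (mem_insert _ _))) (fun i _ => (hw0 i).le) (hw1 n) ?_
    exact fun i _ => (subset_convexHull 𝕜 s).trans' fun v hv =>
      hs (mem_insert_of_mem _ (mem_iUnion_of_mem i hv))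
  exact (Set.subset_sum_range_add hCF n).trans (add_subset_add_right hsum)

end Convex

section Compact

variable {E : Type*} [SeminormedAddCommGroup E]

theorem IsCompact.exists_finite_subset_add {C : Set E} (hC : IsCompact C) {δ : ℝ} (hδ : 0 < δ) :
    ∃ F ⊆ C, F.Finite ∧ ∃ C', IsCompact C' ∧ C' ⊆ closedBall 0 δ ∧ C ⊆ F + C' := by
  obtain ⟨F, hFC, hF, hcover⟩ := finite_cover_balls_of_compact hC hδ
  refine ⟨F, hFC, hF, (C - F) ∩ closedBall 0 δ, ?_, inter_subset_right, fun p hp => ?_⟩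
  · rw [sub_eq_add_neg]
    exact (hC.add hF.isCompact.neg).inter_right isClosed_closedBall
  · obtain ⟨y, hy, hpy⟩ := mem_iUnion₂.1 (hcover hp)
    refine ⟨y, hy, p - y, ⟨sub_mem_sub hp hy, ?_⟩, add_sub_cancel y p⟩
    simpa [dist_eq_norm] using (mem_ball.1 hpy).le

theorem IsCompact.exists_seq_finite_subset_add {K : Set E} (hK : IsCompact K) {δ : ℕ → ℝ}
    (hδ : ∀ n, 0 < δ n) : ∃ F C : ℕ → Set E, C 0 = K ∧ ∀ n, (F n).Finite ∧ F n ⊆ C n ∧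
      C (n + 1) ⊆ closedBall 0 (δ n) ∧ C n ⊆ F n + C (n + 1) := by
  have step : ∀ (n : ℕ) (C : {C : Set E // IsCompact C}), ∃ F : Set E,
      ∃ C' : {C' : Set E // IsCompact C'}, F.Finite ∧ F ⊆ C ∧ C'.1 ⊆ closedBall 0 (δ n) ∧
        C.1 ⊆ F + C' := by
    rintro n ⟨C, hC⟩
    obtain ⟨F, hFC, hF, C', hC', hC'δ, hCF⟩ := hC.exists_finite_subset_add (hδ n)
    exact ⟨F, ⟨C', hC'⟩, hF, hFC, hC'δ, hCF⟩
  choose F next hnext using step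
  let C : ℕ → {C : Set E // IsCompact C} := fun n => Nat.rec ⟨K, hK⟩ next n
  exact ⟨fun n => F n (C n), fun n => (C n).1, rfl, fun n => hnext n (C n)⟩

end Compact

theorem compact_subset_closedConvexHull_of_null_sequence_general
    {E : Type*} [NormedAddCommGroup E] [NormedSpace ℝ E]
    {K : Set E} (hK : IsCompact K) :
    ∃ x : ℕ → E, Filter.Tendsto x Filter.atTop (nhds (0 : E)) ∧
      K ⊆ closure (convexHull ℝ (Set.range x)) := by
  set w : ℕ → ℝ := fun n => 1 / 2 / 2 ^ n
  have hw_pos : ∀ n, 0 < w n := fun n => by positivity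
  have hw_one : HasSum w 1 := hasSum_geometric_two' 1
  have hw_lim : Tendsto (fun n => w (n + 1)) atTop (𝓝 0) :=
    hw_one.summable.tendsto_atTop_zero.comp (tendsto_add_atTop_nat 1)
  obtain ⟨F, C, hC0, hC⟩ :=
    hK.exists_seq_finite_subset_add (δ := fun n => w (n + 1) ^ 2) fun n => by positivity
  choose hF_fin hFC hC_ball hCF using hC
  have hG : Tendsto (fun n => (w n)⁻¹ • F n) atTop (𝓝 0).smallSets := by
    refine tendsto_smallSets_of_succ_subset_closedBall hw_lim fun n => ?_
    calc (w (n + 1))⁻¹ • F (n + 1) ⊆ (w (n + 1))⁻¹ • closedBall 0 (w (n + 1) ^ 2) :=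
          smul_set_mono ((hFC (n + 1)).trans (hC_ball n))
      _ = closedBall 0 (w (n + 1)) := by
          rw [_root_.smul_closedBall _ _ (by positivity), smul_zero, norm_inv,
            Real.norm_of_nonneg (hw_pos _).le]
          field_simp
  have hC_lim : Tendsto C atTop (𝓝 0).smallSets :=
    tendsto_smallSets_of_succ_subset_closedBall (by simpa using hw_lim.pow 2) hC_ball
  obtain ⟨x, hx_lim, hx_range⟩ :=
    exists_seq_tendsto_insert_iUnion_subset_range (fun n => (hF_fin n).smul_set) hG
  refine ⟨x, hx_lim, hC0 ▸ subset_closure_of_eventually_subset_add hC_lim ?_⟩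
  exact Eventually.of_forall (subset_convexHull_add_of_subset_add hw_pos
    (fun n => sum_le_hasSum _ (fun i _ => (hw_pos i).le) hw_one) hx_range hCF)

/-- Every compact subset of a real Banach space is contained in the closed convex hull
of a sequence converging to `0`. -/
theorem compact_subset_closedConvexHull_of_null_sequence
    {E : Type*} [NormedAddCommGroup E] [NormedSpace ℝ E] [CompleteSpace E]
    {K : Set E} (hK : IsCompact K) :
    ∃ x : ℕ → E, Filter.Tendsto x Filter.atTop (nhds (0 : E)) ∧
      K ⊆ closure (convexHull ℝ (Set.range x)) :=
  compact_subset_closedConvexHull_of_null_sequence_general hK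
end

section
/- There exist a real Banach space E and a sequence (xₙ) in E converging to 0 such that the set S = {xₙ : n ∈ ℕ} is not contained in any ellipsoid of E; that is, for every real Hilbert space H and every continuous linear map T : H → E, S is not contained in the image T(B_H) of the closed unit ball B_H of H. -/
/-!
Take `E = ℓ¹(ℕ)` and `xₙ = eₙ / log (n + 2)`. If `xₙ = T hₙ` with `‖hₙ‖ ≤ 1` in a Hilbert
space, the parallelogram law lets one choose signs `εᵢ = ±1` with `‖∑_{i<N} εᵢ hᵢ‖² ≤ N`,
while `‖T (∑_{i<N} εᵢ hᵢ)‖₁ = ∑_{i<N} 1 / log (i + 2) ≥ N / log (N + 2)`. Hence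
`N / log (N + 2) ≤ ‖T‖ √N` for all `N`, which fails for large `N`.
-/

open Filter Finset Real

section SignChoice

variable {H : Type*} [NormedAddCommGroup H] [InnerProductSpace ℝ H]

theorem exists_abs_eq_one_norm_add_smul_sq_le (a b : H) :
    ∃ σ : ℝ, |σ| = 1 ∧ ‖a + σ • b‖ ^ 2 ≤ ‖a‖ ^ 2 + ‖b‖ ^ 2 := by
  have hpar := parallelogram_law_with_norm ℝ a b
  by_cases hplus : ‖a + b‖ ^ 2 ≤ ‖a‖ ^ 2 + ‖b‖ ^ 2
  · exact ⟨1, by simp, by simpa using hplus⟩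
  · refine ⟨-1, by simp, ?_⟩
    rw [neg_one_smul, ← sub_eq_add_neg]
    linarith

theorem exists_abs_eq_one_norm_sum_smul_sq_le {ι : Type*} (s : Finset ι) (h : ι → H) :
    ∃ ε : ι → ℝ, (∀ i, |ε i| = 1) ∧ ‖∑ i ∈ s, ε i • h i‖ ^ 2 ≤ ∑ i ∈ s, ‖h i‖ ^ 2 := by
  classical
  induction s using Finset.induction_on with
  | empty => exact ⟨fun _ => 1, fun _ => abs_one, by simp⟩
  | insert j s hj ih =>
    obtain ⟨ε, hε, hle⟩ := ih
    obtain ⟨σ, hσ, hσle⟩ := exists_abs_eq_one_norm_add_smul_sq_le (∑ i ∈ s, ε i • h i) (h j)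
    refine ⟨Function.update ε j σ, fun i => ?_, ?_⟩
    · rcases eq_or_ne i j with rfl | hij
      · simpa using hσ
      · simpa [Function.update_of_ne hij] using hε i
    · have hs : ∑ i ∈ s, Function.update ε j σ i • h i = ∑ i ∈ s, ε i • h i :=
        sum_congr rfl fun i hi => by rw [Function.update_of_ne (ne_of_mem_of_not_mem hi hj)]
      rw [sum_insert hj, sum_insert hj, hs, Function.update_self, add_comm]
      linarith

end SignChoice

section EllipsoidInL1

variable {ι H : Type*} [DecidableEq ι] [NormedAddCommGroup H] [InnerProductSpace ℝ H]

theorem norm_sum_single_one (s : Finset ι) (f : ι → ℝ) :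
    ‖∑ i ∈ s, lp.single 1 i (f i)‖ = ∑ i ∈ s, |f i| := by
  simpa using lp.norm_sum_single (E := fun _ : ι => ℝ) (p := 1) (by simp) f s

theorem sq_sum_abs_le_of_single_mem_image_closedBall (T : H →L[ℝ] lp (fun _ : ι => ℝ) 1)
    (c : ι → ℝ) (s : Finset ι) (hc : ∀ i ∈ s, lp.single 1 i (c i) ∈ T '' Metric.closedBall 0 1) :
    (∑ i ∈ s, |c i|) ^ 2 ≤ ‖T‖ ^ 2 * #s := by
  choose! g hg hTg using hc
  obtain ⟨ε, hε, hle⟩ := exists_abs_eq_one_norm_sum_smul_sq_le s g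
  set v := ∑ i ∈ s, ε i • g i
  have hv : ‖v‖ ^ 2 ≤ #s :=
    calc ‖v‖ ^ 2 ≤ ∑ i ∈ s, ‖g i‖ ^ 2 := hle
      _ ≤ ∑ _i ∈ s, (1 : ℝ) := sum_le_sum fun i hi => by
        have := mem_closedBall_zero_iff.mp (hg i hi)
        nlinarith [norm_nonneg (g i)]
      _ = #s := by simp
  have hTv : ‖T v‖ = ∑ i ∈ s, |c i| := by
    have hsingle : ∀ i ∈ s, T (ε i • g i) = lp.single 1 i (ε i * c i) := fun i hi => by
      rw [map_smul, hTg i hi, ← lp.single_smul, smul_eq_mul]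
    rw [map_sum, sum_congr rfl hsingle, norm_sum_single_one]
    simp [abs_mul, hε]
  calc (∑ i ∈ s, |c i|) ^ 2 = ‖T v‖ ^ 2 := by rw [hTv]
    _ ≤ (‖T‖ * ‖v‖) ^ 2 := by gcongr; exact T.le_opNorm v
    _ ≤ ‖T‖ ^ 2 * #s := by rw [mul_pow]; gcongr

end EllipsoidInL1

theorem natCast_div_log_add_two_le_sum_range (N : ℕ) :
    N / log (N + 2) ≤ ∑ i ∈ range N, |(log (i + 2))⁻¹| := by
  have hle : ∀ i ∈ range N, (log (N + 2))⁻¹ ≤ |(log (i + 2))⁻¹| := fun i hi => by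
    have hi : (i : ℝ) ≤ N := by exact_mod_cast (mem_range.mp hi).le
    have hlog : 0 < log (i + 2) := log_pos (by linarith [(i.cast_nonneg : (0 : ℝ) ≤ i)])
    rw [abs_of_pos (inv_pos.mpr hlog)]
    exact inv_anti₀ hlog (log_le_log (by positivity) (by linarith))
  simpa [div_eq_mul_inv] using card_nsmul_le_sum _ _ _ hle

theorem tendsto_natCast_div_log_add_two_sq_atTop :
    Tendsto (fun n : ℕ => n / log (n + 2) ^ 2) atTop atTop := by
  have h := (tendsto_pow_log_div_mul_add_atTop 1 (-2) 2 one_ne_zero).comp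
    ((tendsto_natCast_atTop_atTop (R := ℝ)).atTop_add (tendsto_const_nhds (x := (2 : ℝ))))
  have hpos : ∀ᶠ n : ℕ in atTop, 0 < log (n + 2) ^ 2 / n := by
    filter_upwards [eventually_gt_atTop 0] with n hn
    have : 0 < log (n + 2) := log_pos (by linarith [(n.cast_nonneg : (0 : ℝ) ≤ n)])
    positivity
  have := (tendsto_nhdsWithin_iff.mpr
    ⟨by simpa [Function.comp_def] using h, hpos⟩).inv_tendsto_nhdsGT_zero
  simpa only [Pi.inv_def, inv_div] using this

/-- There exist a real Banach space `E` and a null sequence in `E` whose range is not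
contained in any ellipsoid (image of the closed unit ball of a real Hilbert space under
a continuous linear map into `E`). -/
theorem exists_banach_null_sequence_not_in_ellipsoid :
    ∃ (E : Type) (_ : NormedAddCommGroup E) (_ : NormedSpace ℝ E) (_ : CompleteSpace E)
      (x : ℕ → E),
      Filter.Tendsto x Filter.atTop (nhds (0 : E)) ∧
      ∀ (H : Type) (_ : NormedAddCommGroup H) (_ : InnerProductSpace ℝ H)
        (_ : CompleteSpace H) (T : H →L[ℝ] E),
        ¬ (Set.range x ⊆ T '' Metric.closedBall (0 : H) 1) := by
  set c : ℕ → ℝ := fun n => (log (n + 2))⁻¹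
  refine ⟨lp (fun _ : ℕ => ℝ) 1, inferInstance, inferInstance, inferInstance,
    fun n => lp.single 1 n (c n), ?_, ?_⟩
  · have hc : Tendsto c atTop (nhds 0) := (tendsto_log_atTop.comp
      (tendsto_natCast_atTop_atTop.atTop_add tendsto_const_nhds)).inv_tendsto_atTop
    simpa [tendsto_zero_iff_norm_tendsto_zero] using hc.abs
  · intro H _ _ _ T hsub
    have hbound (N : ℕ) : (N / log (N + 2)) ^ 2 ≤ ‖T‖ ^ 2 * N := by
      have := sq_sum_abs_le_of_single_mem_image_closedBall T c (range N)
        fun i _ => hsub ⟨i, rfl⟩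
      refine le_trans ?_ (by simpa using this)
      have hlog : 0 ≤ log (N + 2) := log_nonneg (by linarith [(N.cast_nonneg : (0 : ℝ) ≤ N)])
      gcongr
      exact natCast_div_log_add_two_le_sum_range N
    obtain ⟨N, hN, hN0⟩ := ((tendsto_natCast_div_log_add_two_sq_atTop.eventually_gt_atTop
      (‖T‖ ^ 2)).and (eventually_gt_atTop 0)).exists
    have hsq : (N / log (N + 2)) ^ 2 = N * (N / log (N + 2) ^ 2) := by ring
    have := mul_lt_mul_of_pos_left hN (Nat.cast_pos.mpr hN0 : (0 : ℝ) < N)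
    linarith [hbound N]
end

section
/- Let ι be an index set and (H_i)_{i ∈ ι} a family of real Hilbert spaces. Let L be a real topological vector space admitting a continuous linear map e : L → Π_{i ∈ ι} H_i that is a topological embedding (e is injective and induces the topology of L). Then for every real Banach space E and every continuous linear map f : L → E there exist a real Hilbert space H₀ and continuous linear maps g : L → H₀ and p : H₀ → E such that f = p ∘ g. -/
/-!
Since `e` is an embedding, the topology of `L` is generated by the seminorms `x ↦ ‖e x i‖`, so
the continuous seminorm `x ↦ ‖f x‖` is dominated by finitely many of them:
`‖f x‖ ≤ C ‖g x‖`, where `g x = (e x i)_{i ∈ s}` in the finite Hilbert sum `ℓ²(s; H)`.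
Hence `f` induces a bounded map on the range of `g`, which extends to the completion of that
range, a Hilbert space.
-/

open Topology UniformSpace
open scoped ENNReal

section ProductSeminorms

variable {𝕜 ι : Type*} [NontriviallyNormedField 𝕜] {H : ι → Type*}
  [∀ i, SeminormedAddCommGroup (H i)] [∀ i, NormedSpace 𝕜 (H i)]

theorem withSeminorms_pi_norm :
    WithSeminorms (fun i ↦ (normSeminorm 𝕜 (H i)).comp (LinearMap.proj i) :
      SeminormFamily 𝕜 (∀ i, H i) ι) := by
  rw [SeminormFamily.withSeminorms_iff_nhds_eq_iInf, nhds_pi, Filter.pi]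
  refine iInf_congr fun i ↦ ?_
  rw [Pi.zero_apply, ← comap_norm_nhds_zero (E := H i), Filter.comap_comap]
  rfl

variable {L E : Type*} [AddCommGroup L] [Module 𝕜 L] [TopologicalSpace L]
  [SeminormedAddCommGroup E] [NormedSpace 𝕜 E]

def ContinuousLinearMap.piLpRestrict (p : ℝ≥0∞) (e : L →L[𝕜] ∀ i, H i) (s : Finset ι) :
    L →L[𝕜] PiLp p (fun i : s ↦ H i) :=
  (PiLp.continuousLinearEquiv p 𝕜 _).symm.toContinuousLinearMap ∘L
    ContinuousLinearMap.pi fun i ↦ ContinuousLinearMap.proj (i : ι) ∘L e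

theorem exists_finset_norm_le_of_isInducing (p : ℝ≥0∞) [Fact (1 ≤ p)] (e : L →L[𝕜] ∀ i, H i)
    (he : IsInducing e) (f : L →L[𝕜] E) :
    ∃ (s : Finset ι) (C : ℝ), ∀ x, ‖f x‖ ≤ C * ‖e.piLpRestrict p s x‖ := by
  have hL := he.withSeminorms (f := (e : L →ₗ[𝕜] ∀ i, H i)) (withSeminorms_pi_norm (𝕜 := 𝕜))
  obtain ⟨s, C, -, hC⟩ := Seminorm.bound_of_continuous hL
    ((normSeminorm 𝕜 E).comp (f : L →ₗ[𝕜] E)) (continuous_norm.comp f.continuous)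
  refine ⟨s, C, fun x ↦ ?_⟩
  have hx := hC x
  simp only [Seminorm.comp_apply, coe_normSeminorm, smul_apply, NNReal.smul_def,
    smul_eq_mul, ContinuousLinearMap.coe_coe] at hx
  refine hx.trans ?_
  gcongr
  exact Seminorm.finset_sup_apply_le (norm_nonneg _) fun i hi ↦
    PiLp.norm_apply_le (e.piLpRestrict p s x) ⟨i, hi⟩

end ProductSeminorms

namespace ContinuousLinearMap

variable {𝕜 L G E : Type*} [NontriviallyNormedField 𝕜] [AddCommGroup L] [Module 𝕜 L]
  [TopologicalSpace L] [SeminormedAddCommGroup G] [NormedSpace 𝕜 G]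

noncomputable def toRangeCompletion (g : L →L[𝕜] G) :
    L →L[𝕜] Completion (LinearMap.range (g : L →ₗ[𝕜] G)) :=
  Completion.toComplL ∘L g.rangeRestrict

theorem norm_toRangeCompletion_apply (g : L →L[𝕜] G) (x : L) :
    ‖g.toRangeCompletion x‖ = ‖g x‖ :=
  Completion.norm_coe _

theorem denseRange_toRangeCompletion (g : L →L[𝕜] G) : DenseRange g.toRangeCompletion :=
  Completion.denseRange_coe.comp g.surjective_rangeRestrict.denseRange
    (Completion.continuous_coe _)

theorem exists_eq_comp_toRangeCompletion [NormedAddCommGroup E] [NormedSpace 𝕜 E]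
    [CompleteSpace E] (g : L →L[𝕜] G) (f : L →L[𝕜] E) (hfg : ∃ C, ∀ x, ‖f x‖ ≤ C * ‖g x‖) :
    ∃ p : Completion (LinearMap.range (g : L →ₗ[𝕜] G)) →L[𝕜] E,
      f = p.comp g.toRangeCompletion := by
  refine ⟨(f : L →ₗ[𝕜] E).extendOfNorm (g.toRangeCompletion : L →ₗ[𝕜] _), ?_⟩
  ext x
  refine (LinearMap.extendOfNorm_eq g.denseRange_toRangeCompletion ?_ x).symm
  simpa only [coe_coe, norm_toRangeCompletion_apply] using hfg

end ContinuousLinearMap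

theorem multiHilbert_factorization_general
    {ι : Type} (H : ι → Type)
    [∀ i, NormedAddCommGroup (H i)] [∀ i, InnerProductSpace ℝ (H i)]
    {L : Type} [AddCommGroup L] [Module ℝ L] [TopologicalSpace L]
    (e : L →L[ℝ] (∀ i, H i)) (he : Topology.IsEmbedding e)
    {E : Type} [NormedAddCommGroup E] [NormedSpace ℝ E] [CompleteSpace E]
    (f : L →L[ℝ] E) :
    ∃ (H₀ : Type) (_ : NormedAddCommGroup H₀) (_ : InnerProductSpace ℝ H₀)
      (_ : CompleteSpace H₀) (g : L →L[ℝ] H₀) (p : H₀ →L[ℝ] E),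
      f = p.comp g := by
  obtain ⟨s, C, hC⟩ := exists_finset_norm_le_of_isInducing 2 e he.isInducing f
  obtain ⟨p, hp⟩ := (e.piLpRestrict 2 s).exists_eq_comp_toRangeCompletion f ⟨C, hC⟩
  exact ⟨_, inferInstance, inferInstance, inferInstance, _, p, hp⟩

/-- Factorization lemma for multi-Hilbert spaces: if a real topological vector space `L`
embeds (as a topological vector space) into a product of real Hilbert spaces, then every
continuous linear map from `L` to a real Banach space factors through a real Hilbert space. -/
theorem multiHilbert_factorization
    {ι : Type} (H : ι → Type)
    [∀ i, NormedAddCommGroup (H i)] [∀ i, InnerProductSpace ℝ (H i)]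
    [∀ i, CompleteSpace (H i)]
    {L : Type} [AddCommGroup L] [Module ℝ L] [TopologicalSpace L]
    [IsTopologicalAddGroup L] [ContinuousSMul ℝ L]
    (e : L →L[ℝ] (∀ i, H i)) (he : Topology.IsEmbedding e)
    {E : Type} [NormedAddCommGroup E] [NormedSpace ℝ E] [CompleteSpace E]
    (f : L →L[ℝ] E) :
    ∃ (H₀ : Type) (_ : NormedAddCommGroup H₀) (_ : InnerProductSpace ℝ H₀)
      (_ : CompleteSpace H₀) (g : L →L[ℝ] H₀) (p : H₀ →L[ℝ] E),
      f = p.comp g :=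
  multiHilbert_factorization_general H e he f
end

section
/- Let X be a Lindelöf P-space, M a metrizable topological space, and f : X → M a continuous map. Then the image f(X) is countable. -/
/-- The continuous image of a Lindelöf P-space in a metrizable space is countable. -/
theorem countable_image_of_lindelof_pSpace
    {X : Type*} [TopologicalSpace X] [LindelofSpace X]
    (hP : ∀ S : Set (Set X), S.Countable → (∀ U ∈ S, IsOpen U) → IsOpen (⋂₀ S))
    {M : Type*} [TopologicalSpace M] [TopologicalSpace.MetrizableSpace M]
    {f : X → M} (hf : Continuous f) :
    (Set.range f).Countable := by
  letI := TopologicalSpace.metrizableSpaceMetric M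
  -- each fiber of f is open
  have hfib : ∀ x : X, IsOpen (f ⁻¹' {f x}) := by
    intro x
    have heq : f ⁻¹' {f x} = ⋂₀ (Set.range fun n : ℕ ↦ f ⁻¹' Metric.ball (f x) (1 / (n + 1))) := by
      ext y
      simp only [Set.mem_preimage, Set.mem_singleton_iff, Set.sInter_range, Set.mem_iInter,
        Metric.mem_ball]
      constructor
      · intro h n; rw [h]; simp; positivity
      · intro h
        have : dist (f y) (f x) ≤ 0 := by
          refine le_of_forall_lt_rat_imp_le ?_
          intro q hq
          obtain ⟨n, hn⟩ := exists_nat_one_div_lt (by exact_mod_cast hq : (0:ℝ) < q)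
          exact le_of_lt (lt_trans (h n) (by exact_mod_cast hn))
        exact dist_le_zero.mp this
    rw [heq]
    refine hP _ (Set.countable_range _) ?_
    rintro U ⟨n, rfl⟩
    exact (Metric.isOpen_ball).preimage hf
  obtain ⟨t, htc, hts⟩ := isLindelof_univ.elim_countable_subcover
    (fun x : X ↦ f ⁻¹' {f x}) hfib (fun x _ ↦ Set.mem_iUnion.mpr ⟨x, rfl⟩)
  have : Set.range f ⊆ f '' t := by
    rintro _ ⟨x, rfl⟩
    obtain ⟨x', hx', hxx'⟩ := Set.mem_iUnion₂.mp (hts (Set.mem_univ x))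
    exact ⟨x', hx', hxx'.symm⟩
  exact ((htc.image f).mono this)
end

section
/- Let X be a cellular-Lindelöf P-space, M a metrizable topological space, and f : X → M a continuous map. Then the image f(X) is countable. -/
/-- The continuous image of a cellular-Lindelöf P-space in a metrizable space is
countable. -/
theorem countable_image_of_cellularLindelof_pSpace
    {X : Type*} [TopologicalSpace X]
    (hP : ∀ S : Set (Set X), S.Countable → (∀ U ∈ S, IsOpen U) → IsOpen (⋂₀ S))
    (hCL : ∀ 𝒰 : Set (Set X), (∀ U ∈ 𝒰, IsOpen U ∧ U.Nonempty) →
      𝒰.PairwiseDisjoint id →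
      ∃ L : Set X, IsLindelof L ∧ ∀ U ∈ 𝒰, (L ∩ U).Nonempty)
    {M : Type*} [TopologicalSpace M] [TopologicalSpace.MetrizableSpace M]
    {f : X → M} (hf : Continuous f) :
    (Set.range f).Countable := by
  letI : MetricSpace M := TopologicalSpace.metrizableSpaceMetric M
  -- every fiber is open
  have hfib : ∀ m : M, IsOpen (f ⁻¹' {m}) := by
    intro m
    have h1 : f ⁻¹' {m} =
        ⋂₀ (Set.range (fun n : ℕ => f ⁻¹' Metric.ball m (1 / (n + 1)))) := by
      ext x
      simp only [Set.mem_preimage, Set.mem_singleton_iff, Set.sInter_range, Set.mem_iInter,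
        Metric.mem_ball]
      constructor
      · rintro rfl n
        rw [dist_self]
        positivity
      · intro h
        by_contra hne
        have hd : 0 < dist (f x) m := dist_pos.mpr hne
        obtain ⟨n, hn⟩ := exists_nat_one_div_lt hd
        exact absurd (h n) (not_lt.mpr hn.le)
    rw [h1]
    refine hP _ (Set.countable_range _) ?_
    rintro U ⟨n, rfl⟩
    exact Metric.isOpen_ball.preimage hf
  set 𝒰 : Set (Set X) := (fun m => f ⁻¹' {m}) '' (Set.range f) with h𝒰
  have hopen : ∀ U ∈ 𝒰, IsOpen U ∧ U.Nonempty := by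
    rintro U ⟨m, ⟨x, rfl⟩, rfl⟩
    exact ⟨hfib _, ⟨x, rfl⟩⟩
  have hdisj : 𝒰.PairwiseDisjoint id := by
    rintro U ⟨m, _, rfl⟩ V ⟨m', _, rfl⟩ hUV
    refine Set.disjoint_left.mpr ?_
    rintro x (hx : f x = m) (hx' : f x = m')
    exact hUV (by rw [← hx, ← hx'])
  obtain ⟨L, hL, hmeet⟩ := hCL 𝒰 hopen hdisj
  have hcov : L ⊆ ⋃ m : Set.range f, f ⁻¹' {(m : M)} := by
    intro x _
    exact Set.mem_iUnion.mpr ⟨⟨f x, ⟨x, rfl⟩⟩, rfl⟩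
  obtain ⟨t, htc, hts⟩ := hL.elim_countable_subcover _ (fun m => hfib _) hcov
  have hsub : Set.range f ⊆ Subtype.val '' t := by
    rintro m ⟨x, rfl⟩
    obtain ⟨y, hyL, hy⟩ := hmeet (f ⁻¹' {f x}) ⟨f x, ⟨x, rfl⟩, rfl⟩
    obtain ⟨m', hm't, hym'⟩ := Set.mem_iUnion₂.mp (hts hyL)
    have h1 : f y = (m' : M) := hym'
    have h2 : f y = f x := hy
    exact ⟨m', hm't, by rw [← h1, h2]⟩
  exact (htc.image _).mono hsub
end

section
/- Let Γ be a set and E = ℓ¹(Γ) the Banach space of real summable families on Γ. Let Y = {e_γ : γ ∈ Γ} be the set of standard unit vectors (e_γ is the family equal to 1 at γ and 0 elsewhere). Then Y is a closed subset of E in the weak topology σ(E, E*), and Y is discrete in the weak topology: for every γ ∈ Γ there is a weakly open set W with W ∩ Y = {e_γ}. -/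
/-!
The sum functional `f ↦ ∑ f γ` and the coordinate functionals `f ↦ f γ` are continuous on `ℓ¹(Γ)`,
hence weakly continuous. A family is a unit vector exactly when all its coordinates lie in `{0, 1}`
and its sum is `1`, so the unit vectors form a weakly closed set; and `{f | f γ ≠ 0}` is a weakly
open set meeting them only in `e_γ`.
-/

open Set

theorem WeakSpace.continuous_dual_apply {𝕜 E : Type*} [CommSemiring 𝕜] [TopologicalSpace 𝕜]
    [ContinuousAdd 𝕜] [ContinuousConstSMul 𝕜 𝕜] [AddCommMonoid E] [Module 𝕜 E]
    [TopologicalSpace E] (φ : E →L[𝕜] 𝕜) :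
    Continuous fun x : WeakSpace 𝕜 E => φ ((toWeakSpace 𝕜 E).symm x) :=
  WeakBilin.eval_continuous _ φ

theorem exists_pi_single_one_eq_iff {ι : Type*} [DecidableEq ι] (f : ι → ℝ) :
    (∃ i, Pi.single i 1 = f) ↔ ∑' i, f i = 1 ∧ ∀ i, f i ∈ ({0, 1} : Set ℝ) := by
  constructor
  · rintro ⟨i, rfl⟩
    refine ⟨tsum_pi_single i 1, fun j => ?_⟩
    rw [Pi.single_apply]
    split_ifs <;> simp
  · rintro ⟨hsum, hf⟩
    have hf_nonneg (j : ι) : 0 ≤ f j := by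
      rcases hf j with h | h <;> simp_all
    -- a non-summable family has `tsum` equal to `0`
    have hsummable : Summable f := by
      by_contra h
      rw [tsum_eq_zero_of_not_summable h] at hsum
      exact zero_ne_one hsum
    obtain ⟨i, hi⟩ : ∃ i, f i = 1 := by
      by_contra! h
      have hf0 : f = 0 := funext fun j => (hf j).resolve_right (h j)
      simp [hf0] at hsum
    refine ⟨i, funext fun j => ?_⟩
    rcases eq_or_ne j i with rfl | hji
    · simp [hi]
    rw [Pi.single_eq_of_ne hji]
    refine ((hf j).resolve_right fun hj => ?_).symm
    have h_pair_le := hsummable.sum_le_tsum {i, j} fun k _ => hf_nonneg k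
    rw [Finset.sum_pair hji.symm, hi, hj, hsum] at h_pair_le
    norm_num at h_pair_le

theorem lp.exists_single_one_eq_iff {ι : Type*} [DecidableEq ι] {p : ENNReal}
    (f : lp (fun _ : ι => ℝ) p) :
    (∃ i, lp.single p i (1 : ℝ) = f) ↔ ∑' i, f i = 1 ∧ ∀ i, f i ∈ ({0, 1} : Set ℝ) := by
  simp only [lp.ext_iff, lp.coeFn_single]
  exact exists_pi_single_one_eq_iff f

/-- In `ℓ¹(Γ)`, the set of standard unit vectors is weakly closed and weakly discrete. -/
theorem lp_one_unitVectors_weaklyClosed_and_discrete (Γ : Type*) [DecidableEq Γ] :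
    let E := lp (fun _ : Γ => ℝ) 1
    let Y : Set (WeakSpace ℝ E) :=
      Set.range fun γ : Γ => toWeakSpace ℝ E (lp.single 1 γ (1 : ℝ))
    IsClosed Y ∧
      ∀ γ : Γ, ∃ W : Set (WeakSpace ℝ E), IsOpen W ∧
        W ∩ Y = {toWeakSpace ℝ E (lp.single 1 γ (1 : ℝ))} := by
  intro E
  set e := toWeakSpace ℝ E
  intro Y
  have hcoord (γ : Γ) : Continuous fun x => e.symm x γ :=
    WeakSpace.continuous_dual_apply (lp.evalCLM ℝ (fun _ : Γ => ℝ) 1 γ)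
  have hsum : Continuous fun x => ∑' γ, e.symm x γ :=
    WeakSpace.continuous_dual_apply (lp.tsumCLM ℝ Γ ℝ)
  have hY : Y = {x | ∑' γ, e.symm x γ = 1} ∩ ⋂ γ, (fun x => e.symm x γ) ⁻¹' {0, 1} := by
    ext x
    obtain ⟨f, rfl⟩ := e.surjective x
    simp [Y, e.injective.eq_iff, lp.exists_single_one_eq_iff]
  refine ⟨?_, fun γ => ⟨(fun x => e.symm x γ) ⁻¹' {0}ᶜ,
    isOpen_compl_singleton.preimage (hcoord γ), ?_⟩⟩
  · rw [hY]
    exact (isClosed_eq hsum continuous_const).inter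
      (isClosed_iInter fun γ => (toFinite _).isClosed.preimage (hcoord γ))
  · ext x
    simp only [Y, mem_inter_iff, mem_preimage, mem_compl_iff, mem_singleton_iff, mem_range]
    constructor
    · rintro ⟨hx, δ, rfl⟩
      rw [e.symm_apply_apply, lp.single_apply, Pi.single_apply] at hx
      rw [(by simpa using hx : γ = δ)]
    · rintro rfl
      simp
end

section
/- The Banach space ℓ¹ = ℓ¹(ℕ) is not the union of countably many weakly compact subsets: there is no sequence (Kₙ) of subsets of ℓ¹, each compact in the weak topology σ(ℓ¹, (ℓ¹)*), with ℓ¹ = ⋃ₙ Kₙ. -/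
/-!
Weakly compact sets are norm closed, so by Baire's theorem one of them would contain a ball
`B(x, r)`, hence the translates `x + (r / 2) • eₖ` of the unit vectors. These converge to `x`
coordinatewise while their sums stay at `∑ x + r / 2`, so they have no weak cluster point,
contradicting weak compactness.
-/

open Filter Topology

theorem MapClusterPt.eq_of_tendsto {X ι : Type*} [TopologicalSpace X] [T2Space X] {l : Filter ι}
    {u : ι → X} {x y : X} (h : MapClusterPt x l u) (hu : Tendsto u l (𝓝 y)) : x = y :=
  eq_of_nhds_neBot (h.neBot.mono (inf_le_inf_left _ hu))

theorem MapClusterPt.apply_of_toWeakSpace {𝕜 E ι : Type*} [CommSemiring 𝕜] [TopologicalSpace 𝕜]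
    [ContinuousAdd 𝕜] [ContinuousConstSMul 𝕜 𝕜] [AddCommMonoid E] [Module 𝕜 E]
    [TopologicalSpace E] {l : Filter ι} {u : ι → E} {z : E}
    (h : MapClusterPt (toWeakSpace 𝕜 E z) l (toWeakSpace 𝕜 E ∘ u)) (g : E →L[𝕜] 𝕜) :
    MapClusterPt (g z) l (g ∘ u) :=
  -- The ascription defers the comparison of `WeakSpace 𝕜 E` with `E` to a defeq check.
  (h.continuousAt_comp (f := fun w : WeakSpace 𝕜 E => topDualPairing 𝕜 E g w)
    (WeakBilin.eval_continuous (topDualPairing 𝕜 E).flip g).continuousAt :)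

theorem isClosed_of_isCompact_toWeakSpace_image {E : Type*} [AddCommGroup E] [Module ℝ E]
    [TopologicalSpace E] [SeparatingDual ℝ E] {K : Set E}
    (hK : IsCompact (toWeakSpace ℝ E '' K)) : IsClosed K := by
  have := hK.isClosed.preimage (toWeakSpaceCLM ℝ E).continuous
  rwa [show ⇑(toWeakSpaceCLM ℝ E) = toWeakSpace ℝ E from rfl,
    Set.preimage_image_eq _ (toWeakSpace ℝ E).injective] at this

namespace lp

theorem not_mapClusterPt_toWeakSpace_add_single (x z : lp (fun _ : ℕ => ℝ) 1) {c : ℝ}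
    (hc : c ≠ 0) :
    ¬ MapClusterPt (toWeakSpace ℝ _ z) atTop
      (toWeakSpace ℝ _ ∘ fun k => x + lp.single 1 k c) := by
  intro h
  have hzx : z = x := by
    ext j
    refine (h.apply_of_toWeakSpace (evalCLM ℝ (fun _ => ℝ) 1 j)).eq_of_tendsto ?_
    refine tendsto_const_nhds.congr' ?_
    filter_upwards [eventually_gt_atTop j] with k hk
    simp [evalCLM, Pi.single_eq_of_ne hk.ne]
  have hsum : ∑' n, z n = ∑' n, x n + c := by
    refine (h.apply_of_toWeakSpace (tsumCLM ℝ ℕ ℝ)).eq_of_tendsto (tendsto_const_nhds.congr ?_)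
    intro k
    rw [Function.comp_apply, map_add, tsumCLM_apply, tsumCLM_apply, lp.coeFn_single,
      tsum_pi_single]
  rw [hzx] at hsum
  exact hc (by linarith)

theorem not_ball_subset_of_isCompact_toWeakSpace_image {K : Set (lp (fun _ : ℕ => ℝ) 1)}
    (hK : IsCompact (toWeakSpace ℝ _ '' K)) (x : lp (fun _ : ℕ => ℝ) 1) {r : ℝ} (hr : 0 < r) :
    ¬ Metric.ball x r ⊆ K := by
  intro hball
  have hmem : ∀ k, x + lp.single 1 k (r / 2) ∈ K := fun k => hball <| by
    rw [Metric.mem_ball, dist_self_add_left, lp.norm_single zero_lt_one, Real.norm_of_nonneg]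
    all_goals linarith
  obtain ⟨_, ⟨z, -, rfl⟩, hz⟩ := hK.exists_clusterPt
    (f := map (toWeakSpace ℝ _ ∘ fun k => x + lp.single 1 k (r / 2)) atTop) <|
    le_principal_iff.2 <| mem_map.2 <| univ_mem' fun k => Set.mem_image_of_mem _ (hmem k)
  exact not_mapClusterPt_toWeakSpace_add_single x z (by positivity) hz

end lp

/-- `ℓ¹(ℕ)` is not the union of countably many weakly compact subsets. -/
theorem lp_one_not_countable_union_weaklyCompact :
    ¬ ∃ K : ℕ → Set (lp (fun _ : ℕ => ℝ) 1),
        (∀ n, IsCompact (toWeakSpace ℝ (lp (fun _ : ℕ => ℝ) 1) '' K n)) ∧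
        (⋃ n, K n) = Set.univ := by
  rintro ⟨K, hK, hcover⟩
  obtain ⟨n, x, hx⟩ := nonempty_interior_of_iUnion_of_closed
    (fun n => isClosed_of_isCompact_toWeakSpace_image (hK n)) hcover
  obtain ⟨r, hr, hball⟩ := Metric.isOpen_iff.1 isOpen_interior x hx
  exact lp.not_ball_subset_of_isCompact_toWeakSpace_image (hK n) x hr
    (hball.trans interior_subset)
end

section
/- Let m, n be natural numbers and let a : Fin m → ℕ and b : Fin n → ℕ. Consider the set P of real m × n matrices C with all entries nonnegative, whose i-th row sum equals a(i) for every i and whose j-th column sum equals b(j) for every j. Then every extreme point of the convex set P is a matrix all of whose entries are (nonnegative) integers. -/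
/-!
Let `C` be an extreme point and `S` the set of positions where `C` is not integral. A row (or
column) that meets `S` meets it at least twice, since its sum is an integer; hence `S` has at
least as many cells as it has rows and columns together. The homogeneous system "all line sums
vanish" on matrices supported on `S` has one redundant equation, so it has a nonzero solution `D`
as soon as `S ≠ ∅`. Every entry of `C` on `S` is positive, so `C ± εD` stay in the polytope for
small `ε > 0`, contradicting extremality.
-/

open Finset Filter Topology

theorem eq_zero_of_add_mem_of_sub_mem_of_mem_extremePoints {𝕜 E : Type*} [Ring 𝕜] [LinearOrder 𝕜]
    [IsStrictOrderedRing 𝕜] [Invertible (2 : 𝕜)] [AddCommGroup E] [Module 𝕜 E] {s : Set E}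
    {x d : E} (hx : x ∈ s.extremePoints 𝕜) (hadd : x + d ∈ s) (hsub : x - d ∈ s) : d = 0 :=
  add_eq_left.mp (hx.2 hadd hsub (mem_openSegment_add_sub x d))

theorem exists_pos_forall_abs_mul_le {ι : Type*} [Finite ι] {f g : ι → ℝ} (hf : ∀ i, 0 ≤ f i)
    (hg : ∀ i, f i = 0 → g i = 0) : ∃ ε > 0, ∀ i, |ε * g i| ≤ f i := by
  have hsmall : ∀ i, ∀ᶠ ε in 𝓝 (0 : ℝ), |ε * g i| ≤ f i := fun i ↦ by
    rcases (hf i).eq_or_lt with hfi | hfi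
    · simp [hg i hfi.symm, ← hfi]
    · have hcont : Continuous fun ε : ℝ ↦ |ε * g i| := by fun_prop
      exact ((hcont.tendsto' 0 0 (by simp)).eventually (gt_mem_nhds hfi)).mono fun _ ↦ le_of_lt
  obtain ⟨ε, hbound, hpos⟩ :=
    ((eventually_nhdsWithin_of_eventually_nhds (eventually_all.2 hsmall)).and
      self_mem_nhdsWithin).exists (f := 𝓝[>] (0 : ℝ))
  exact ⟨ε, hpos, hbound⟩

theorem AddSubgroup.exists_ne_notMem_of_sum_mem {α M : Type*} [AddCommGroup M] (G : AddSubgroup M)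
    {s : Finset α} {f : α → M} (hsum : ∑ j ∈ s, f j ∈ G) {j₀ : α} (hj₀ : j₀ ∈ s) (hf : f j₀ ∉ G) :
    ∃ j ∈ s, j ≠ j₀ ∧ f j ∉ G := by
  classical
  by_contra! hrest
  rw [← add_sum_erase s f hj₀] at hsum
  have hrest_mem : ∑ j ∈ s.erase j₀, f j ∈ G :=
    G.sum_mem fun j hj ↦ hrest j (mem_of_mem_erase hj) (ne_of_mem_erase hj)
  exact hf ((G.add_mem_cancel_right hrest_mem).mp hsum)

theorem Matrix.exists_ne_zero_support_subset_sum_row_col_eq_zero {K ι κ : Type*} [Field K]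
    [Fintype ι] [Fintype κ] [DecidableEq ι] [DecidableEq κ] {S : Finset (ι × κ)}
    (hS : S.Nonempty) (hcard : #(S.image Prod.fst) + #(S.image Prod.snd) ≤ #S) :
    ∃ D : Matrix ι κ K, D ≠ 0 ∧ (∀ i j, (i, j) ∉ S → D i j = 0) ∧
      (∀ i, ∑ j, D i j = 0) ∧ ∀ j, ∑ i, D i j = 0 := by
  obtain ⟨⟨i₀, j₀⟩, hp₀⟩ := hS
  have hj₀ : j₀ ∈ S.image Prod.snd := mem_image_of_mem Prod.snd hp₀
  -- The column sum at `j₀` is left out: it is forced by the other constraints.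
  let φ : (ι × κ → K) →ₗ[K] ((Sᶜ : Finset (ι × κ)) → K) × (S.image Prod.fst → K) ×
      ((S.image Prod.snd).erase j₀ → K) :=
    { toFun x := (fun p ↦ x p, fun i ↦ ∑ j, x (i, j), fun j ↦ ∑ i, x (i, j))
      map_add' x y := by ext <;> simp [sum_add_distrib]
      map_smul' c x := by ext <;> simp [mul_sum] }
  have hdim : Module.finrank K (((Sᶜ : Finset (ι × κ)) → K) × (S.image Prod.fst → K) ×
      ((S.image Prod.snd).erase j₀ → K)) < Module.finrank K (ι × κ → K) := by
    have := card_compl_add_card S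
    have := card_erase_add_one hj₀
    simp only [Module.finrank_prod, Module.finrank_fintype_fun_eq_card, Fintype.card_coe]
    omega
  obtain ⟨x, hx, hx0⟩ := (Submodule.ne_bot_iff _).mp (LinearMap.ker_ne_bot_of_finrank_lt hdim)
  replace hx : φ x = 0 := hx
  have hoff (p : ι × κ) (hp : p ∉ S) : x p = 0 :=
    congrFun (congrArg Prod.fst hx) ⟨p, mem_compl.2 hp⟩
  have hrow (i : ι) : ∑ j, x (i, j) = 0 := by
    by_cases hi : i ∈ S.image Prod.fst
    · exact congrFun (congrArg (fun y ↦ y.2.1) hx) ⟨i, hi⟩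
    · exact sum_eq_zero fun j _ ↦ hoff _ fun h ↦ hi (mem_image_of_mem Prod.fst h)
  have hcol_ne (j : κ) (hj : j ≠ j₀) : ∑ i, x (i, j) = 0 := by
    by_cases hjS : j ∈ S.image Prod.snd
    · exact congrFun (congrArg (fun y ↦ y.2.2) hx) ⟨j, mem_erase.2 ⟨hj, hjS⟩⟩
    · exact sum_eq_zero fun i _ ↦ hoff _ fun h ↦ hjS (mem_image_of_mem Prod.snd h)
  refine ⟨Matrix.of fun i j ↦ x (i, j), fun h ↦ hx0 (funext fun p ↦ ?_), fun i j ↦ hoff (i, j),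
    hrow, fun j ↦ ?_⟩
  · simpa using congrFun (congrFun h p.1) p.2
  · rcases eq_or_ne j j₀ with rfl | hj
    · calc ∑ i, x (i, j) = ∑ j', ∑ i, x (i, j') :=
            (sum_eq_single j (fun j' _ hj' ↦ hcol_ne j' hj') (by simp)).symm
        _ = 0 := by rw [sum_comm]; exact sum_eq_zero fun i _ ↦ hrow i
    · exact hcol_ne j hj

theorem Matrix.card_image_fst_add_card_image_snd_le {ι κ M : Type*} [Fintype ι] [Fintype κ]
    [DecidableEq ι] [DecidableEq κ] [AddCommGroup M] (G : AddSubgroup M) {C : Matrix ι κ M}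
    (hrow : ∀ i, ∑ j, C i j ∈ G) (hcol : ∀ j, ∑ i, C i j ∈ G) {S : Finset (ι × κ)}
    (hS : ∀ p, p ∈ S ↔ C p.1 p.2 ∉ G) : #(S.image Prod.fst) + #(S.image Prod.snd) ≤ #S := by
  have hrows : 2 * #(S.image Prod.fst) ≤ #S := by
    refine mul_card_image_le_card S 2 fun i hi ↦ ?_
    obtain ⟨⟨i, j⟩, hp, rfl⟩ := mem_image.1 hi
    obtain ⟨j', -, hj', hj'S⟩ := G.exists_ne_notMem_of_sum_mem (hrow i) (mem_univ j) ((hS _).1 hp)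
    exact one_lt_card.2 ⟨(i, j'), by simp [hS, hj'S], (i, j), by simp [hp], by simp [hj']⟩
  have hcols : 2 * #(S.image Prod.snd) ≤ #S := by
    refine mul_card_image_le_card S 2 fun j hj ↦ ?_
    obtain ⟨⟨i, j⟩, hp, rfl⟩ := mem_image.1 hj
    obtain ⟨i', -, hi', hi'S⟩ := G.exists_ne_notMem_of_sum_mem (hcol j) (mem_univ i) ((hS _).1 hp)
    exact one_lt_card.2 ⟨(i', j), by simp [hS, hi'S], (i, j), by simp [hp], by simp [hi']⟩
  omega

def transportationPolytope {ι κ : Type*} [Fintype ι] [Fintype κ] (a : ι → ℝ) (b : κ → ℝ) :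
    Set (Matrix ι κ ℝ) :=
  {C | (∀ i j, 0 ≤ C i j) ∧ (∀ i, ∑ j, C i j = a i) ∧ ∀ j, ∑ i, C i j = b j}

namespace transportationPolytope

variable {ι κ : Type*} [Fintype ι] [Fintype κ] {a : ι → ℝ} {b : κ → ℝ} {C D : Matrix ι κ ℝ}

theorem add_mem (hC : C ∈ transportationPolytope a b) (hDrow : ∀ i, ∑ j, D i j = 0)
    (hDcol : ∀ j, ∑ i, D i j = 0) (hnonneg : ∀ i j, 0 ≤ C i j + D i j) :
    C + D ∈ transportationPolytope a b := by
  obtain ⟨-, hrow, hcol⟩ := hC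
  refine ⟨hnonneg, fun i ↦ ?_, fun j ↦ ?_⟩
  · simp [sum_add_distrib, hrow, hDrow]
  · simp [sum_add_distrib, hcol, hDcol]

theorem eq_zero_of_mem_extremePoints (hC : C ∈ (transportationPolytope a b).extremePoints ℝ)
    (hDrow : ∀ i, ∑ j, D i j = 0) (hDcol : ∀ j, ∑ i, D i j = 0)
    (hDsupp : ∀ i j, C i j = 0 → D i j = 0) : D = 0 := by
  obtain ⟨ε, hε, hεD⟩ := exists_pos_forall_abs_mul_le (f := fun p : ι × κ ↦ C p.1 p.2)
    (g := fun p ↦ D p.1 p.2) (fun p ↦ hC.1.1 p.1 p.2) (fun p ↦ hDsupp p.1 p.2)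
  have hbound (i j) : -C i j ≤ ε * D i j ∧ ε * D i j ≤ C i j := abs_le.1 (hεD (i, j))
  have hadd : C + ε • D ∈ transportationPolytope a b :=
    add_mem hC.1 (by simp [← mul_sum, hDrow]) (by simp [← mul_sum, hDcol]) fun i j ↦ by
      simp only [Matrix.smul_apply, smul_eq_mul]
      linarith [hbound i j]
  have hsub : C - ε • D ∈ transportationPolytope a b := by
    rw [sub_eq_add_neg]
    refine add_mem hC.1 (by simp [← mul_sum, hDrow]) (by simp [← mul_sum, hDcol]) fun i j ↦ ?_
    simp only [Matrix.neg_apply, Matrix.smul_apply, smul_eq_mul]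
    linarith [hbound i j]
  have hεD_zero : ε • D = 0 := eq_zero_of_add_mem_of_sub_mem_of_mem_extremePoints hC hadd hsub
  exact (smul_eq_zero.1 hεD_zero).resolve_left hε.ne'

theorem mem_of_mem_extremePoints (G : AddSubgroup ℝ)
    (ha : ∀ i, a i ∈ G) (hb : ∀ j, b j ∈ G)
    (hC : C ∈ (transportationPolytope a b).extremePoints ℝ) (i : ι) (j : κ) : C i j ∈ G := by
  classical
  obtain ⟨-, hrow, hcol⟩ := hC.1
  by_contra hij
  set S : Finset (ι × κ) := {p | C p.1 p.2 ∉ G}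
  have hS (p : ι × κ) : p ∈ S ↔ C p.1 p.2 ∉ G := by simp [S]
  have hcard := Matrix.card_image_fst_add_card_image_snd_le G (fun i ↦ hrow i ▸ ha i)
    (fun j ↦ hcol j ▸ hb j) hS
  obtain ⟨D, hD, hDS, hDrow, hDcol⟩ :=
    Matrix.exists_ne_zero_support_subset_sum_row_col_eq_zero (K := ℝ) ⟨(i, j), (hS _).2 hij⟩ hcard
  refine hD (eq_zero_of_mem_extremePoints hC hDrow hDcol fun i j h ↦ hDS i j ?_)
  simp [hS, h, G.zero_mem]

end transportationPolytope

/-- Integrality of the transportation polytope: every extreme point of the set of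
nonnegative real `m × n` matrices with prescribed natural-number row sums `a` and column
sums `b` has natural-number entries. -/
theorem transportation_polytope_extremePoints_integral
    (m n : ℕ) (a : Fin m → ℕ) (b : Fin n → ℕ) :
    ∀ C ∈ Set.extremePoints ℝ
      {C : Matrix (Fin m) (Fin n) ℝ |
        (∀ i j, 0 ≤ C i j) ∧ (∀ i, ∑ j, C i j = (a i : ℝ)) ∧
        (∀ j, ∑ i, C i j = (b j : ℝ))},
      ∀ i j, ∃ k : ℕ, C i j = (k : ℝ) := by
  intro C hC i j
  obtain ⟨k, hk⟩ := transportationPolytope.mem_of_mem_extremePoints (a := fun i ↦ (a i : ℝ))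
    (b := fun j ↦ (b j : ℝ)) (Int.castAddHom ℝ).range (fun i ↦ ⟨a i, by simp⟩)
    (fun j ↦ ⟨b j, by simp⟩) hC i j
  replace hk : (k : ℝ) = C i j := hk
  lift k to ℕ using by exact_mod_cast hk ▸ hC.1.1 i j
  exact ⟨k, by simpa using hk.symm⟩
end

section
/- Let (X, d) be a pseudometric space and let v : X →₀ ℤ be a finitely supported integer-valued function on X whose coefficients sum to zero. Then for every integer n, D(n·v) = |n|·D(v), where D is the Graev seminorm. -/
/-- The Graev seminorm on the free abelian group over a pseudometric space `X`:
`D v = inf { Σᵢ |cᵢ| · d(xᵢ, yᵢ) : v = Σᵢ cᵢ · (δ_{xᵢ} − δ_{yᵢ}), cᵢ ∈ ℤ }`. -/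
noncomputable def graevSeminorm {X : Type*} [PseudoMetricSpace X] (v : X →₀ ℤ) : ℝ :=
  sInf { r : ℝ | ∃ (k : ℕ) (c : Fin k → ℤ) (x y : Fin k → X),
    v = ∑ i, c i • (Finsupp.single (x i) (1 : ℤ) - Finsupp.single (y i) (1 : ℤ)) ∧
    r = ∑ i, |(c i : ℝ)| * dist (x i) (y i) }

/-!
Scaling a representation of `v` gives `D (n • v) ≤ |n| * D v`, and `D (-v) = D v` by reversing
edges. For `m * D v ≤ D (m • v)`, view a representation of `m • v` as a multiset `E` of directed
edges `x → y` (the pair `(x, y)` taken `|c|` times, reversed when `c < 0`) whose divergence is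
`m • v`. Counting the edges across a finite set `S` shows `∑_{a ∈ S} v a ≤ #(edges leaving S)`,
and by Gale's supply–demand theorem this cut condition yields a sub-multiset of `E` of divergence
exactly `v`. Peeling off `m` such pieces splits the cost of `E` into `m` costs, each `≥ D v`.
-/

namespace GraevSeminorm

open Finsupp

variable {X : Type*}

noncomputable def divergence : Multiset (X × X) →+ (X →₀ ℤ) :=
  Multiset.sumAddMonoidHom.comp (Multiset.mapAddMonoidHom fun p => single p.1 1 - single p.2 1)

@[simp]
lemma divergence_cons (p : X × X) (E : Multiset (X × X)) :
    divergence (p ::ₘ E) = single p.1 1 - single p.2 1 + divergence E := by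
  simp [divergence]

@[simp]
lemma divergence_singleton (p : X × X) :
    divergence {p} = single p.1 1 - single p.2 1 := by
  simp [divergence]

lemma divergence_map_swap (E : Multiset (X × X)) :
    divergence (E.map Prod.swap) = -divergence E := by
  induction E using Multiset.induction_on with
  | empty => simp
  | cons p E ih => simp [ih]; abel

section Cost

variable [PseudoMetricSpace X]

noncomputable def cost : Multiset (X × X) →+ ℝ :=
  Multiset.sumAddMonoidHom.comp (Multiset.mapAddMonoidHom fun p => dist p.1 p.2)

@[simp]
lemma cost_cons (p : X × X) (E : Multiset (X × X)) :
    cost (p ::ₘ E) = dist p.1 p.2 + cost E := by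
  simp [cost]

@[simp]
lemma cost_singleton (p : X × X) : cost {p} = dist p.1 p.2 := by
  simp [cost]

lemma cost_nonneg (E : Multiset (X × X)) : 0 ≤ cost E :=
  Multiset.sum_nonneg fun _ h => by
    obtain ⟨p, -, rfl⟩ := Multiset.mem_map.mp h
    exact dist_nonneg

lemma cost_map_swap (E : Multiset (X × X)) : cost (E.map Prod.swap) = cost E := by
  induction E using Multiset.induction_on with
  | empty => simp
  | cons p E ih => simp [ih, dist_comm]

lemma exists_divergence_eq_zsmul (c : ℤ) (x y : X) :
    ∃ E, divergence E = c • (single x 1 - single y 1) ∧ cost E = |(c : ℝ)| * dist x y := by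
  obtain ⟨n, rfl | rfl⟩ := c.eq_nat_or_neg
  · exact ⟨n • {(x, y)}, by simp, by simp⟩
  · exact ⟨n • {(y, x)}, by simp [← smul_neg], by simp [dist_comm]⟩

lemma exists_fin_family_of_divergence (E : Multiset (X × X)) :
    ∃ (k : ℕ) (c : Fin k → ℤ) (x y : Fin k → X),
      divergence E = ∑ i, c i • (single (x i) (1 : ℤ) - single (y i) (1 : ℤ)) ∧
      cost E = ∑ i, |(c i : ℝ)| * dist (x i) (y i) := by
  induction E using Multiset.induction_on with
  | empty => exact ⟨0, Fin.elim0, Fin.elim0, Fin.elim0, by simp, by simp⟩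
  | cons p E ih =>
    obtain ⟨k, c, x, y, hdiv, hcost⟩ := ih
    exact ⟨k + 1, Fin.cons 1 c, Fin.cons p.1 x, Fin.cons p.2 y,
      by simp [Fin.sum_univ_succ, hdiv], by simp [Fin.sum_univ_succ, hcost]⟩

lemma graevSeminorm_eq_sInf_cost (v : X →₀ ℤ) :
    graevSeminorm v = sInf (cost '' {E | divergence E = v}) := by
  unfold graevSeminorm
  congr 1
  ext r
  constructor
  · rintro ⟨k, c, x, y, rfl, rfl⟩
    choose E hdiv hcost using fun i => exists_divergence_eq_zsmul (c i) (x i) (y i)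
    exact ⟨∑ i, E i, by simp [map_sum, hdiv], by simp [map_sum, hcost]⟩
  · rintro ⟨E, rfl, rfl⟩
    exact exists_fin_family_of_divergence E

lemma graevSeminorm_nonneg (v : X →₀ ℤ) : 0 ≤ graevSeminorm v := by
  rw [graevSeminorm_eq_sInf_cost]
  exact Real.sInf_nonneg (by rintro _ ⟨E, -, rfl⟩; exact cost_nonneg E)

lemma bddBelow_cost_image (s : Set (Multiset (X × X))) : BddBelow (cost '' s) :=
  ⟨0, by rintro _ ⟨E, -, rfl⟩; exact cost_nonneg E⟩

lemma graevSeminorm_divergence_le (E : Multiset (X × X)) :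
    graevSeminorm (divergence E) ≤ cost E := by
  rw [graevSeminorm_eq_sInf_cost]
  exact csInf_le (bddBelow_cost_image _) ⟨E, rfl, rfl⟩

@[simp]
lemma graevSeminorm_zero : graevSeminorm (0 : X →₀ ℤ) = 0 :=
  le_antisymm (by simpa using graevSeminorm_divergence_le (0 : Multiset (X × X)))
    (graevSeminorm_nonneg 0)

lemma image_cost_neg_subset (v : X →₀ ℤ) :
    cost '' {E | divergence E = -v} ⊆ cost '' {E | divergence E = v} := by
  rintro _ ⟨E, hE : divergence E = -v, rfl⟩
  exact ⟨E.map Prod.swap, by simp [divergence_map_swap, hE], cost_map_swap E⟩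

@[simp]
lemma graevSeminorm_neg (v : X →₀ ℤ) : graevSeminorm (-v) = graevSeminorm v := by
  rw [graevSeminorm_eq_sInf_cost, graevSeminorm_eq_sInf_cost]
  congr 1
  refine (image_cost_neg_subset v).antisymm ?_
  simpa using image_cost_neg_subset (-v)

end Cost

section Cuts

variable [DecidableEq X]

def cutOut (E : Multiset (X × X)) (S : Finset X) : ℕ := E.countP fun p => p.1 ∈ S ∧ p.2 ∉ S

def cutIn (E : Multiset (X × X)) (S : Finset X) : ℕ := E.countP fun p => p.2 ∈ S ∧ p.1 ∉ S

@[simp]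
lemma cutOut_zero (S : Finset X) : cutOut 0 S = 0 := Multiset.countP_zero _

@[simp]
lemma cutOut_cons (p : X × X) (E : Multiset (X × X)) (S : Finset X) :
    cutOut (p ::ₘ E) S = cutOut E S + if p.1 ∈ S ∧ p.2 ∉ S then 1 else 0 :=
  Multiset.countP_cons _ _ _

lemma cutOut_empty (E : Multiset (X × X)) : cutOut E ∅ = 0 :=
  Multiset.countP_eq_zero.mpr fun _ _ h => Finset.notMem_empty _ h.1

@[simp]
lemma cutIn_zero (S : Finset X) : cutIn 0 S = 0 := Multiset.countP_zero _

@[simp]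
lemma cutIn_cons (p : X × X) (E : Multiset (X × X)) (S : Finset X) :
    cutIn (p ::ₘ E) S = cutIn E S + if p.2 ∈ S ∧ p.1 ∉ S then 1 else 0 :=
  Multiset.countP_cons _ _ _

lemma sum_divergence_apply (E : Multiset (X × X)) (S : Finset X) :
    ∑ a ∈ S, divergence E a = cutOut E S - cutIn E S := by
  induction E using Multiset.induction_on with
  | empty => simp
  | cons p E ih =>
    by_cases h₁ : p.1 ∈ S <;> by_cases h₂ : p.2 ∈ S <;>
      simp [Finset.sum_add_distrib, Finset.sum_sub_distrib, single_apply, ih, h₁, h₂] <;> ring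

lemma cutOut_union_add_cutOut_inter_le (E : Multiset (X × X)) (A B : Finset X) :
    cutOut E (A ∪ B) + cutOut E (A ∩ B) ≤ cutOut E A + cutOut E B := by
  induction E using Multiset.induction_on with
  | empty => simp
  | cons p E ih =>
    simp only [cutOut_cons, Finset.mem_union, Finset.mem_inter]
    split_ifs <;> first | omega | tauto

lemma cutOut_insert_le {E : Multiset (X × X)} {S : Finset X} {x : X}
    (h : ∀ p ∈ E, p.1 = x → p.2 ∈ insert x S) : cutOut E (insert x S) ≤ cutOut E S := by
  simp only [cutOut, Multiset.countP_eq_card_filter]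
  refine Multiset.card_le_card (Multiset.le_filter.mpr ⟨Multiset.filter_le _ _, fun p hp => ?_⟩)
  obtain ⟨hpE, h₁, h₂⟩ := Multiset.mem_filter.mp hp
  exact ⟨(Finset.mem_insert.mp h₁).resolve_left fun hx => h₂ (h p hpE hx),
    fun h₂' => h₂ (Finset.mem_insert_of_mem h₂')⟩

variable {V : Finset X} {E : Multiset (X × X)} {v : X →₀ ℤ}

def IsTight (E : Multiset (X × X)) (v : X →₀ ℤ) (S : Finset X) : Prop :=
  (cutOut E S : ℤ) ≤ ∑ a ∈ S, v a

lemma IsTight.union {S T : Finset X} (hS : IsTight E v S) (hT : IsTight E v T)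
    (hcut : ∑ a ∈ S ∩ T, v a ≤ cutOut E (S ∩ T)) : IsTight E v (S ∪ T) := by
  have hsub := cutOut_union_add_cutOut_inter_le E S T
  have hsum := Finset.sum_union_inter (s₁ := S) (s₂ := T) (f := v)
  unfold IsTight at *
  omega

lemma exists_maximal_tight (x : X) (hcut : ∀ S ⊆ V, ∑ a ∈ S, v a ≤ cutOut E S) :
    ∃ T ⊆ V, x ∉ T ∧ IsTight E v T ∧ ∀ S ⊆ V, x ∉ S → IsTight E v S → S ⊆ T := by
  classical
  set 𝒜 := V.powerset.filter fun S => x ∉ S ∧ IsTight E v S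
  have hunion : ∀ S ∈ 𝒜, ∀ T ∈ 𝒜, S ⊔ T ∈ 𝒜 := by
    simp only [𝒜, Finset.mem_filter, Finset.mem_powerset, Finset.sup_eq_union]
    rintro S ⟨hSV, hxS, hS⟩ T ⟨hTV, hxT, hT⟩
    exact ⟨Finset.union_subset hSV hTV, by simp [hxS, hxT],
      hS.union hT (hcut _ (Finset.inter_subset_left.trans hSV))⟩
  have hempty : ∅ ∈ 𝒜 := Finset.mem_filter.mpr
    ⟨V.empty_mem_powerset, Finset.notMem_empty x, by simp [IsTight, cutOut_empty]⟩
  have hmax : 𝒜.sup id ∈ 𝒜 := Finset.sup_mem (𝒜 : Set (Finset X)) hempty hunion 𝒜 id fun _ h => h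
  obtain ⟨hTV, hxT, hT⟩ := by simpa only [𝒜, Finset.mem_filter, Finset.mem_powerset] using hmax
  exact ⟨𝒜.sup id, hTV, hxT, hT, fun S hSV hxS hS =>
    Finset.le_sup (f := id) (by simp [𝒜, hSV, hxS, hS])⟩

lemma exists_edge_avoiding_tight {x : X} (hcut : ∀ S ⊆ V, ∑ a ∈ S, v a ≤ cutOut E S)
    (hxV : x ∈ V) (hvx : 0 < v x) :
    ∃ p ∈ E, p.1 = x ∧ ∀ S ⊆ V, x ∉ S → IsTight E v S → p.2 ∉ S := by
  obtain ⟨T, hTV, hxT, hT, hmax⟩ := exists_maximal_tight x hcut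
  have : ∃ p ∈ E, p.1 = x ∧ p.2 ∉ insert x T := by
    by_contra! h
    have hins := hcut (insert x T) (Finset.insert_subset hxV hTV)
    rw [Finset.sum_insert hxT] at hins
    have := cutOut_insert_le h
    rw [IsTight] at hT
    omega
  obtain ⟨p, hpE, hpx, hpT⟩ := this
  exact ⟨p, hpE, hpx, fun S hSV hxS hS hpS =>
    hpT (Finset.mem_insert_of_mem (hmax S hSV hxS hS hpS))⟩

lemma sum_le_cutOut_erase {p : X × X} (hcut : ∀ S ⊆ V, ∑ a ∈ S, v a ≤ cutOut E S) (hpE : p ∈ E)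
    (hp : ∀ S ⊆ V, p.1 ∉ S → IsTight E v S → p.2 ∉ S) :
    ∀ S ⊆ V, ∑ a ∈ S, (v - single p.1 1 + single p.2 1 : X →₀ ℤ) a ≤ cutOut (E.erase p) S := by
  intro S hSV
  have hout := cutOut_cons p (E.erase p) S
  rw [Multiset.cons_erase hpE] at hout
  have hS := hcut S hSV
  have hslack : p.1 ∉ S → p.2 ∈ S → ∑ a ∈ S, v a < cutOut E S :=
    fun h₁ h₂ => lt_of_not_ge fun h => hp S hSV h₁ h h₂
  by_cases h₁ : p.1 ∈ S <;> by_cases h₂ : p.2 ∈ S <;>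
    simp [Finset.sum_add_distrib, Finset.sum_sub_distrib, single_apply, h₁, h₂] at hout hslack ⊢ <;>
    omega

/-- Gale's supply–demand theorem. The edge removed in the inductive step leaves the largest tight
set avoiding its tail, which exists because tight sets are closed under union. -/
theorem exists_le_divergence_eq_of_forall_sum_le_cutOut
    (hE : ∀ p ∈ E, p.1 ∈ V ∧ p.2 ∈ V) (hv : v.support ⊆ V) (hsum : ∑ a ∈ V, v a = 0)
    (hcut : ∀ S ⊆ V, ∑ a ∈ S, v a ≤ cutOut E S) : ∃ F ≤ E, divergence F = v := by
  induction E using Multiset.strongInductionOn generalizing v with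
  | ih E ih =>
  by_cases hpos : ∃ x ∈ V, 0 < v x
  · obtain ⟨x, hxV, hvx⟩ := hpos
    obtain ⟨p, hpE, rfl, hp⟩ := exists_edge_avoiding_tight hcut hxV hvx
    have hpV := hE p hpE
    set w : X →₀ ℤ := v - single p.1 1 + single p.2 1 with hw
    have hwV : w.support ⊆ V :=
      support_add.trans <| Finset.union_subset
        (support_sub.trans <| Finset.union_subset hv <| support_single_subset.trans <| by
          simpa using hpV.1)
        (support_single_subset.trans <| by simpa using hpV.2)
    have hwsum : ∑ a ∈ V, w a = 0 := by
      simp [hw, Finset.sum_add_distrib, Finset.sum_sub_distrib, hsum, single_apply, hpV]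
    obtain ⟨F, hFE, hF⟩ := ih (E.erase p) (Multiset.erase_lt.mpr hpE)
      (fun q hq => hE q (Multiset.mem_of_mem_erase hq)) hwV hwsum
      (sum_le_cutOut_erase hcut hpE hp)
    refine ⟨p ::ₘ F, (Multiset.cons_le_cons p hFE).trans_eq (Multiset.cons_erase hpE), ?_⟩
    rw [divergence_cons, hF, hw]
    abel
  · push Not at hpos
    have hzero := (Finset.sum_eq_zero_iff_of_nonpos hpos).mp hsum
    refine ⟨0, Multiset.zero_le E, ?_⟩
    ext a
    by_cases ha : a ∈ V
    · simp [hzero a ha]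
    · simp [notMem_support_iff.mp fun h => ha (hv h)]

theorem exists_le_divergence_eq_of_divergence_eq_nsmul {m : ℕ}
    (hE : divergence E = (m + 1) • v) : ∃ F ≤ E, divergence F = v := by
  set V := v.support ∪ E.toFinset.image Prod.fst ∪ E.toFinset.image Prod.snd
  have hEV : ∀ p ∈ E, p.1 ∈ V ∧ p.2 ∈ V := fun p hp =>
    ⟨Finset.mem_union_left _ (Finset.mem_union_right _ (Finset.mem_image_of_mem _
      (Multiset.mem_toFinset.mpr hp))),
    Finset.mem_union_right _ (Finset.mem_image_of_mem _ (Multiset.mem_toFinset.mpr hp))⟩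
  have hbal : ∀ S, (m + 1 : ℤ) * ∑ a ∈ S, v a = cutOut E S - cutIn E S := fun S => by
    rw [← sum_divergence_apply, hE, Finset.mul_sum]
    simp
  refine exists_le_divergence_eq_of_forall_sum_le_cutOut hEV
    (Finset.subset_union_left.trans Finset.subset_union_left) ?_ fun S _ => ?_
  · have hout : cutOut E V = 0 := Multiset.countP_eq_zero.mpr fun p hp h => h.2 (hEV p hp).2
    have hin : cutIn E V = 0 := Multiset.countP_eq_zero.mpr fun p hp h => h.2 (hEV p hp).1
    have := hbal V
    rw [hout, hin, sub_self, mul_eq_zero] at this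
    exact this.resolve_left (by omega)
  · have := hbal S
    rcases le_or_gt 0 (∑ a ∈ S, v a) with h | h <;> nlinarith

end Cuts

section Homogeneity

variable [PseudoMetricSpace X]

theorem nsmul_graevSeminorm_le_cost (m : ℕ) {E : Multiset (X × X)} {v : X →₀ ℤ}
    (hE : divergence E = m • v) : m * graevSeminorm v ≤ cost E := by
  classical
  induction m generalizing E with
  | zero => simpa using cost_nonneg E
  | succ m ih =>
    obtain ⟨F, hFE, hF⟩ := exists_le_divergence_eq_of_divergence_eq_nsmul hE
    have hsplit : F + (E - F) = E := add_tsub_cancel_of_le hFE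
    have hrest : divergence (E - F) = m • v := by
      rw [← hsplit, map_add, hF, succ_nsmul'] at hE
      exact add_left_cancel hE
    calc ((m + 1 : ℕ) : ℝ) * graevSeminorm v
        = graevSeminorm (divergence F) + m * graevSeminorm v := by rw [hF]; push_cast; ring
      _ ≤ cost F + cost (E - F) := add_le_add (graevSeminorm_divergence_le F) (ih hrest)
      _ = cost E := by rw [← map_add, hsplit]

theorem graevSeminorm_nsmul (v : X →₀ ℤ) (m : ℕ) :
    graevSeminorm (m • v) = m * graevSeminorm v := by
  classical
  rcases m with _ | m
  · simp
  rcases Set.eq_empty_or_nonempty {E : Multiset (X × X) | divergence E = v} with hv | hv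
  · -- `v` has no representation (its coefficient sum is nonzero), so both sides are `sInf ∅ = 0`.
    have hmv : {E : Multiset (X × X) | divergence E = (m + 1) • v} = ∅ :=
      Set.eq_empty_of_forall_notMem fun E hE =>
        let ⟨F, _, hF⟩ := exists_le_divergence_eq_of_divergence_eq_nsmul hE
        hv.subset hF
    simp [graevSeminorm_eq_sInf_cost, hv, hmv]
  apply le_antisymm
  · rw [graevSeminorm_eq_sInf_cost, graevSeminorm_eq_sInf_cost, ← smul_eq_mul,
      ← Real.sInf_smul_of_nonneg (by positivity)]
    refine csInf_le_csInf (bddBelow_cost_image _) (hv.image cost).smul_set ?_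
    rintro _ ⟨_, ⟨E, hE, rfl⟩, rfl⟩
    exact ⟨(m + 1) • E, by simp [hE.out], by simp⟩
  · obtain ⟨E, hE⟩ := hv
    rw [graevSeminorm_eq_sInf_cost ((m + 1) • v)]
    refine le_csInf ⟨_, (m + 1) • E, by simp [hE.out], rfl⟩ ?_
    rintro _ ⟨E, hE, rfl⟩
    exact nsmul_graevSeminorm_le_cost _ hE

end Homogeneity

end GraevSeminorm

theorem graevSeminorm_zsmul_general {X : Type*} [PseudoMetricSpace X] (v : X →₀ ℤ) (n : ℤ) :
    graevSeminorm (n • v) = |(n : ℝ)| * graevSeminorm v := by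
  obtain ⟨m, rfl | rfl⟩ := n.eq_nat_or_neg <;> simp [GraevSeminorm.graevSeminorm_nsmul]

/-- The Graev seminorm is absolutely homogeneous with respect to integer multiples:
`D(n • v) = |n| · D(v)` for every `v` with coefficient sum zero. -/
theorem graevSeminorm_zsmul {X : Type*} [PseudoMetricSpace X] (v : X →₀ ℤ)
    (hv : v.sum (fun _ c => c) = 0) (n : ℤ) :
    graevSeminorm (n • v) = |(n : ℝ)| * graevSeminorm v :=
  graevSeminorm_zsmul_general v n
end

section
/- Let (X, d) be a pseudometric space and let v : X →₀ ℤ be a finitely supported integer-valued function on X whose coefficients sum to zero. Then the Graev seminorm D(v), computed as an infimum over representations v = Σᵢ cᵢ·(δ_{xᵢ} − δ_{yᵢ}) with integer coefficients cᵢ ∈ ℤ, equals the analogous infimum inf { Σᵢ |cᵢ|·d(xᵢ, yᵢ) : v = Σᵢ cᵢ·(δ_{xᵢ} − δ_{yᵢ}) } taken over representations with real coefficients cᵢ ∈ ℝ, where v is viewed (via the coefficient embedding ℤ → ℝ) as an element of the free real vector space X →₀ ℝ. -/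
/-- The analogous infimum computed with real coefficients, on the free real vector
space over `X`. -/
noncomputable def graevSeminormReal {X : Type*} [PseudoMetricSpace X] (v : X →₀ ℝ) : ℝ :=
  sInf { r : ℝ | ∃ (k : ℕ) (c : Fin k → ℝ) (x y : Fin k → X),
    v = ∑ i, c i • (Finsupp.single (x i) (1 : ℝ) - Finsupp.single (y i) (1 : ℝ)) ∧
    r = ∑ i, |c i| * dist (x i) (y i) }

/-!
Integer representations are real ones, so only `graevSeminorm v ≤ graevSeminormReal v` needs
proof, and it suffices to round every real representation `∑ cᵢ (δ_{xᵢ} - δ_{yᵢ})` of an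
integer vector to an integer one on the same pairs without increasing the cost. We induct on the
number of non-integer `cᵢ`, viewing their pairs `{xᵢ, yᵢ}` as the edges of a graph. If the edge
vectors are linearly dependent (the graph has a cycle), the cost is affine along the dependency
until the first coefficient becomes an integer, so moving in the non-increasing direction up to
that point removes a non-integer coefficient. Otherwise the edges form a forest, which has a
leaf `p`; evaluating `v` at `p` then forces the coefficient of the leaf edge to be an integer.
-/

open Finset

namespace Graev

section Forest

variable {K X ι : Type*} [Field K] {F : Finset ι} {u : ι → X →₀ K}

theorem card_add_one_le_card_biUnion_support [DecidableEq X] (hind : LinearIndepOn K u (F : Set ι))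
    (hF : F.Nonempty) (hsum : ∀ i ∈ F, (u i).sum (fun _ a => a) = 0) :
    #F + 1 ≤ #(F.biUnion fun i => (u i).support) := by
  classical
  set V := F.biUnion fun i => (u i).support
  obtain ⟨i, hi⟩ := hF
  obtain ⟨p, hp⟩ := Finsupp.support_nonempty_iff.mpr (hind.ne_zero hi)
  have hpV : p ∈ V := mem_biUnion.mpr ⟨i, hi, hp⟩
  -- `single p 1` has coefficient sum `1`, so it extends the family to `#F + 1` independent
  -- vectors supported on `V`
  let L : (X →₀ K) →ₗ[K] K := Finsupp.lsum K fun _ => LinearMap.id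
  have hspan : Submodule.span K (Set.range fun j : (F : Set ι) => u j) ≤ LinearMap.ker L :=
    Submodule.span_le.mpr <| by
      rintro _ ⟨j, rfl⟩
      exact hsum j j.2
  have hp_notMem : Finsupp.single p 1 ∉ Submodule.span K (Set.range fun j : (F : Set ι) => u j) :=
    fun h => by simpa [L] using hspan h
  have hind' := LinearIndependent.option hind hp_notMem
  have hle : Submodule.span K (Set.range fun o : Option (F : Set ι) =>
      Option.casesOn' o (Finsupp.single p (1 : K)) fun j => u j) ≤
      Submodule.span K ((V.image fun q => Finsupp.single q (1 : K)) : Set (X →₀ K)) := by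
    rw [coe_image, ← Finsupp.supported_eq_span_single, Submodule.span_le]
    rintro _ ⟨_ | j, rfl⟩
    · exact (Finsupp.mem_supported K _).mpr <| by
        simpa using (Finsupp.support_single_subset (a := p) (b := (1 : K))).trans
          (singleton_subset_iff.mpr hpV)
    · exact (Finsupp.mem_supported K _).mpr <| by
        simpa using subset_biUnion_of_mem (fun i => (u i).support) j.2
  calc #F + 1 = Fintype.card (Option (F : Set ι)) := by simp
    _ = _ := (finrank_span_eq_card hind').symm
    _ ≤ _ := Submodule.finrank_mono hle
    _ ≤ #(V.image fun q => Finsupp.single q (1 : K)) := finrank_span_finset_le_card _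
    _ ≤ #V := card_image_le

-- For edge vectors `δ_x - δ_y` this says that a nonempty forest has a leaf.
theorem exists_leaf_of_linearIndepOn (hind : LinearIndepOn K u (F : Set ι))
    (hF : F.Nonempty) (hsum : ∀ i ∈ F, (u i).sum (fun _ a => a) = 0)
    (hcard : ∀ i ∈ F, #(u i).support ≤ 2) :
    ∃ p, ∃ i ∈ F, ∀ j ∈ F, u j p ≠ 0 ↔ j = i := by
  classical
  set V := F.biUnion fun i => (u i).support
  have hV : #F + 1 ≤ #V := card_add_one_le_card_biUnion_support hind hF hsum
  have hdouble : ∑ p ∈ V, #{j ∈ F | u j p ≠ 0} = ∑ j ∈ F, #(u j).support := by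
    have := sum_card_bipartiteAbove_eq_sum_card_bipartiteBelow (s := F) (t := V)
      (r := fun j p => u j p ≠ 0)
    simp only [bipartiteAbove, bipartiteBelow] at this
    rw [← this]
    refine sum_congr rfl fun j hj => congrArg card ?_
    ext p
    simp only [mem_filter, Finsupp.mem_support_iff, and_iff_right_iff_imp]
    exact fun hp => mem_biUnion.mpr ⟨j, hj, Finsupp.mem_support_iff.mpr hp⟩
  have hlt : ∑ p ∈ V, #{j ∈ F | u j p ≠ 0} < ∑ _p ∈ V, 2 := by
    have := sum_le_sum hcard
    simp only [sum_const, smul_eq_mul] at this ⊢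
    omega
  obtain ⟨p, hpV, hp⟩ := exists_lt_of_sum_lt hlt
  obtain ⟨i, hi, hip⟩ := mem_biUnion.mp hpV
  have huniq := card_le_one.mp (Nat.le_of_lt_succ hp)
  refine ⟨p, i, hi, fun j hj => ⟨fun hjp => ?_, fun hji => hji ▸ Finsupp.mem_support_iff.mp hip⟩⟩
  exact huniq j (mem_filter.mpr ⟨hj, hjp⟩) i (mem_filter.mpr ⟨hi, Finsupp.mem_support_iff.mp hip⟩)

end Forest

section Edges

variable {X : Type*}

theorem single_sub_single_apply_mem (a b p : X) :
    let e : X →₀ ℝ := Finsupp.single a 1 - Finsupp.single b 1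
    e p = 0 ∨ e p = 1 ∨ e p = -1 := by
  classical
  simp only [Finsupp.sub_apply, Finsupp.single_apply]
  split_ifs <;> norm_num

theorem sum_single_sub_single (a b : X) :
    (Finsupp.single a (1 : ℝ) - Finsupp.single b 1).sum (fun _ r => r) = 0 := by
  simp [Finsupp.sum_sub_index]

theorem card_support_single_sub_single_le (a b : X) :
    #(Finsupp.single a (1 : ℝ) - Finsupp.single b 1).support ≤ 2 := by
  classical
  refine (card_le_card (t := {a, b}) (Finsupp.support_subset_iff.mpr fun p hp => ?_)).trans
    card_le_two
  simp only [coe_insert, coe_singleton, Set.mem_insert_iff, Set.mem_singleton_iff, not_or] at hp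
  simp [Ne.symm hp.1, Ne.symm hp.2]

theorem mapRange_intCast_sum_zsmul {ι : Type*} [Fintype ι] (m : ι → ℤ) (x y : ι → X) :
    (∑ i, m i • (Finsupp.single (x i) (1 : ℤ) - Finsupp.single (y i) 1)).mapRange
        (fun z : ℤ => (z : ℝ)) Int.cast_zero =
      ∑ i, (m i : ℝ) • (Finsupp.single (x i) (1 : ℝ) - Finsupp.single (y i) 1) := by
  classical
  ext p
  simp [Finsupp.finsetSum_apply, Finsupp.single_apply]

end Edges

section Rounding

variable {ι : Type*} [Fintype ι]

open Classical in
noncomputable def fracSupport (c : ι → ℝ) : Finset ι := {i | c i ∉ (⊥ : Subring ℝ)}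

@[simp]
theorem mem_fracSupport {c : ι → ℝ} {i : ι} : i ∈ fracSupport c ↔ c i ∉ (⊥ : Subring ℝ) := by
  simp [fracSupport]

theorem abs_eq_sign_mul_of_floor_le {a b : ℝ} (ha : a ∉ (⊥ : Subring ℝ)) (h₁ : ⌊a⌋ ≤ b)
    (h₂ : b ≤ ⌊a⌋ + 1) : |b| = SignType.sign a * b := by
  rcases lt_or_gt_of_ne (fun h : a = 0 => ha (h ▸ zero_mem _)) with ha' | ha'
  · have : ⌊a⌋ + 1 ≤ 0 := Int.floor_lt.mpr (by simpa using ha')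
    have : b ≤ 0 := by exact_mod_cast h₂.trans (by exact_mod_cast this)
    simp [sign_neg ha', abs_of_nonpos this]
  · have : (0 : ℝ) ≤ ⌊a⌋ := by exact_mod_cast Int.floor_nonneg.mpr ha'.le
    simp [sign_pos ha', abs_of_nonneg (this.trans h₁)]

theorem exists_pos_add_mul_mem_bot {a d : ℝ} (ha : a ∉ (⊥ : Subring ℝ)) (hd : d ≠ 0) :
    ∃ τ > 0, a + τ * d ∈ (⊥ : Subring ℝ) ∧
      ∀ t ∈ Set.Icc 0 τ, |a + t * d| = |a| + t * (SignType.sign a * d) := by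
  have hfloor : (⌊a⌋ : ℝ) < a :=
    (Int.floor_le a).lt_of_ne fun h => ha (Subring.mem_bot.mpr ⟨_, h⟩)
  have hceil : a < ⌊a⌋ + 1 := Int.lt_floor_add_one a
  suffices ∃ τ > 0, a + τ * d ∈ (⊥ : Subring ℝ) ∧
      ∀ t ∈ Set.Icc 0 τ, ⌊a⌋ ≤ a + t * d ∧ a + t * d ≤ ⌊a⌋ + 1 by
    obtain ⟨τ, hτ, hint, hbounds⟩ := this
    refine ⟨τ, hτ, hint, fun t ht => ?_⟩
    rw [abs_eq_sign_mul_of_floor_le ha (hbounds t ht).1 (hbounds t ht).2, ← sign_mul_self a]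
    ring
  rcases hd.lt_or_gt with hd | hd
  · refine ⟨(⌊a⌋ - a) / d, div_pos_of_neg_of_neg (by linarith) hd,
      Subring.mem_bot.mpr ⟨⌊a⌋, by field_simp; ring⟩, fun t ⟨ht₀, htτ⟩ => ?_⟩
    have := mul_le_mul_of_nonpos_right htτ hd.le
    rw [div_mul_cancel₀ _ hd.ne] at this
    constructor <;> nlinarith
  · refine ⟨(⌊a⌋ + 1 - a) / d, div_pos (by linarith) hd,
      Subring.mem_bot.mpr ⟨⌊a⌋ + 1, by push_cast; field_simp; ring⟩, fun t ⟨ht₀, htτ⟩ => ?_⟩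
    have := mul_le_mul_of_nonneg_right htτ hd.le
    rw [div_mul_cancel₀ _ hd.ne'] at this
    constructor <;> nlinarith

-- Up to the first time `t` at which some `cᵢ + t δᵢ` is an integer, no coefficient changes sign,
-- so the cost is affine in `t`; replacing `δ` by `-δ` if necessary, it does not increase.
theorem exists_fracSupport_ssubset_of_sum_smul_eq_zero {M : Type*} [AddCommGroup M]
    [Module ℝ M] {u : ι → M} {c δ : ι → ℝ} (w : ι → ℝ) (hδ : ∑ i, δ i • u i = 0)
    (hδc : ∀ i, δ i ≠ 0 → i ∈ fracSupport c) (hδne : δ ≠ 0) :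
    ∃ c' : ι → ℝ, ∑ i, c' i • u i = ∑ i, c i • u i ∧
      ∑ i, |c' i| * w i ≤ ∑ i, |c i| * w i ∧ fracSupport c' ⊂ fracSupport c := by
  wlog hslope : ∑ i, SignType.sign (c i) * δ i * w i ≤ 0 generalizing δ
  · refine this (δ := -δ) (by simp [neg_smul, hδ]) (by simpa using hδc) (neg_ne_zero.mpr hδne) ?_
    simp only [Pi.neg_apply, mul_neg, neg_mul, sum_neg_distrib]
    linarith
  obtain ⟨i₀, hi₀⟩ := Function.ne_iff.mp hδne
  have hτ := fun i (hi : δ i ≠ 0) => exists_pos_add_mul_mem_bot (mem_fracSupport.mp (hδc i hi)) hi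
  choose! τ hτpos hτint hτabs using hτ
  classical
  obtain ⟨i₁, hi₁, hmin⟩ := exists_min_image {i | δ i ≠ 0} τ ⟨i₀, by simpa using hi₀⟩
  rw [mem_filter_univ] at hi₁
  set t := τ i₁
  have habs : ∀ i, |c i + t * δ i| = |c i| + t * (SignType.sign (c i) * δ i) := by
    intro i
    by_cases hi : δ i = 0
    · simp [hi]
    · exact hτabs i hi t ⟨(hτpos i₁ hi₁).le, hmin i (by simpa using hi)⟩
  refine ⟨fun i => c i + t * δ i, ?_, ?_, ?_⟩
  · simp [add_smul, mul_smul, sum_add_distrib, ← smul_sum, hδ]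
  · calc ∑ i, |c i + t * δ i| * w i
          = ∑ i, |c i| * w i + t * ∑ i, SignType.sign (c i) * δ i * w i := by
            simp only [habs, add_mul, sum_add_distrib, mul_sum, mul_assoc]
      _ ≤ ∑ i, |c i| * w i := by
            linarith [mul_nonpos_of_nonneg_of_nonpos (hτpos i₁ hi₁).le hslope]
  · refine (ssubset_iff_of_subset fun i hi => ?_).mpr ⟨i₁, hδc i₁ hi₁, ?_⟩
    · by_contra hic
      have hδi : δ i = 0 := by_contra fun h => hic (hδc i h)
      rw [mem_fracSupport, not_not] at hic
      exact mem_fracSupport.mp hi (by simpa [hδi] using hic)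
    · simpa using hτint i₁ hi₁

variable {X : Type*} (x y : ι → X)

theorem not_linearIndepOn_fracSupport {c : ι → ℝ}
    (hint : ∀ p, (∑ i, c i • (Finsupp.single (x i) (1 : ℝ) - Finsupp.single (y i) 1) : X →₀ ℝ) p ∈
      (⊥ : Subring ℝ))
    (hF : (fracSupport c).Nonempty) :
    ¬ LinearIndepOn ℝ (fun i => Finsupp.single (x i) (1 : ℝ) - Finsupp.single (y i) 1)
      (fracSupport c : Set ι) := by
  classical
  intro hind
  obtain ⟨p, i, hiF, hi⟩ := exists_leaf_of_linearIndepOn hind hF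
    (fun j _ => sum_single_sub_single _ _) (fun j _ => card_support_single_sub_single_le _ _)
  set e : ι → ℝ := fun j => (Finsupp.single (x j) (1 : ℝ) - Finsupp.single (y j) 1 : X →₀ ℝ) p
  have he : ∀ j, e j ∈ (⊥ : Subring ℝ) := fun j => by
    rcases single_sub_single_apply_mem (x j) (y j) p with h | h | h <;> simp only [e, h]
    exacts [zero_mem _, one_mem _, neg_mem (one_mem _)]
  -- at the vertex `p`, only the coefficient `c i` can contribute a non-integer
  have hrest : ∑ j ∈ univ.erase i, c j * e j ∈ (⊥ : Subring ℝ) := by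
    refine sum_mem fun j hj => ?_
    by_cases hjF : j ∈ fracSupport c
    · have : e j = 0 := not_not.mp fun h => ne_of_mem_erase hj ((hi j hjF).mp h)
      simp [this]
    · exact mul_mem (not_not.mp (mt mem_fracSupport.mpr hjF)) (he j)
  have hci : c i * e i ∈ (⊥ : Subring ℝ) := by
    have hsplit : (∑ j, c j • (Finsupp.single (x j) (1 : ℝ) - Finsupp.single (y j) 1) : X →₀ ℝ) p
        = c i * e i + ∑ j ∈ univ.erase i, c j * e j := by
      rw [Finsupp.finsetSum_apply, ← add_sum_erase _ _ (mem_univ i)]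
      rfl
    simpa [hsplit] using sub_mem (hint p) hrest
  apply mem_fracSupport.mp hiF
  rcases single_sub_single_apply_mem (x i) (y i) p with h | h | h
  · exact absurd h ((hi i hiF).mpr rfl)
  · simpa [show e i = 1 from h] using hci
  · simpa [show e i = -1 from h] using neg_mem hci

theorem exists_fracSupport_ssubset {c : ι → ℝ} (w : ι → ℝ)
    (hint : ∀ p, (∑ i, c i • (Finsupp.single (x i) (1 : ℝ) - Finsupp.single (y i) 1) : X →₀ ℝ) p ∈
      (⊥ : Subring ℝ))
    (hF : (fracSupport c).Nonempty) :
    ∃ c' : ι → ℝ, ∑ i, c' i • (Finsupp.single (x i) (1 : ℝ) - Finsupp.single (y i) 1) =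
        ∑ i, c i • (Finsupp.single (x i) (1 : ℝ) - Finsupp.single (y i) 1) ∧
      ∑ i, |c' i| * w i ≤ ∑ i, |c i| * w i ∧ fracSupport c' ⊂ fracSupport c := by
  obtain ⟨δ, hδF, hδ, hδne⟩ := linearDepOn_iff'.mp (not_linearIndepOn_fracSupport x y hint hF)
  refine exists_fracSupport_ssubset_of_sum_smul_eq_zero w (δ := δ) ?_
    (fun i hi => not_not.mp fun h => hi ((Finsupp.mem_supported' _ _).mp hδF i h))
    (mt Finsupp.coe_eq_zero.mp hδne)
  rwa [Finsupp.linearCombination_apply, Finsupp.sum_fintype _ _ (by simp)] at hδ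

theorem exists_integral_coeffs_le (c w : ι → ℝ)
    (hint : ∀ p, (∑ i, c i • (Finsupp.single (x i) (1 : ℝ) - Finsupp.single (y i) 1) : X →₀ ℝ) p ∈
      (⊥ : Subring ℝ)) :
    ∃ c' : ι → ℝ, (∀ i, c' i ∈ (⊥ : Subring ℝ)) ∧
      ∑ i, c' i • (Finsupp.single (x i) (1 : ℝ) - Finsupp.single (y i) 1) =
        ∑ i, c i • (Finsupp.single (x i) (1 : ℝ) - Finsupp.single (y i) 1) ∧
      ∑ i, |c' i| * w i ≤ ∑ i, |c i| * w i := by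
  induction hs : fracSupport c using Finset.strongInduction generalizing c with
  | H s ih =>
    rcases s.eq_empty_or_nonempty with rfl | hne
    · exact ⟨c, fun i => not_not.mp fun h => by simpa [hs] using mem_fracSupport.mpr h, rfl, le_rfl⟩
    · obtain ⟨c', hsum, hcost, hlt⟩ := exists_fracSupport_ssubset x y w hint (hs ▸ hne)
      obtain ⟨c'', hint'', hsum'', hcost''⟩ := ih _ (hs ▸ hlt) c' (hsum ▸ hint) rfl
      exact ⟨c'', hint'', hsum''.trans hsum, hcost''.trans hcost⟩

end Rounding

end Graev

theorem graevSeminorm_eq_graevSeminormReal_general {X : Type*} [PseudoMetricSpace X]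
    (v : X →₀ ℤ) :
    graevSeminorm v =
      graevSeminormReal (X := X) (v.mapRange (fun z : ℤ => (z : ℝ)) Int.cast_zero) := by
  refine csInf_eq_csInf_of_forall_exists_le ?_ ?_
  · rintro _ ⟨k, m, x, y, rfl, rfl⟩
    exact ⟨_, ⟨k, fun i => m i, x, y, Graev.mapRange_intCast_sum_zsmul m x y, rfl⟩, le_rfl⟩
  · rintro _ ⟨k, c, x, y, hc, rfl⟩
    have hint : ∀ p, (∑ i, c i • (Finsupp.single (x i) (1 : ℝ) - Finsupp.single (y i) 1) :
        X →₀ ℝ) p ∈ (⊥ : Subring ℝ) := fun p => hc ▸ Subring.mem_bot.mpr ⟨v p, rfl⟩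
    obtain ⟨c', hc'int, hc'sum, hc'cost⟩ :=
      Graev.exists_integral_coeffs_le x y c (fun i => dist (x i) (y i)) hint
    choose m hm using fun i => Subring.mem_bot.mp (hc'int i)
    have hinj := Finsupp.mapRange_injective (α := X) _ Int.cast_zero (Int.cast_injective (α := ℝ))
    refine ⟨_, ⟨k, m, x, y, hinj ?_, rfl⟩, ?_⟩
    · rw [hc, Graev.mapRange_intCast_sum_zsmul, ← hc'sum]
      simp only [hm]
    · simpa only [hm] using hc'cost

/-- For an element of the free abelian group with coefficient sum zero, the Graev
seminorm computed over integer-coefficient representations equals the infimum computed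
over real-coefficient representations. -/
theorem graevSeminorm_eq_graevSeminormReal {X : Type*} [PseudoMetricSpace X]
    (v : X →₀ ℤ) (hv : v.sum (fun _ c => c) = 0) :
    graevSeminorm v =
      graevSeminormReal (X := X) (v.mapRange (fun z : ℤ => (z : ℝ)) Int.cast_zero) :=
  graevSeminorm_eq_graevSeminormReal_general v
end

section
/- Let (X, d) be a pseudometric space and let x, y ∈ X. Then the Graev seminorm of δ_x − δ_y equals d(x, y): D(δ_x − δ_y) = d(x, y). -/
/-- The Graev seminorm of `δ_x − δ_y` equals `d(x, y)`: the canonical invariant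
extension of the pseudometric restricts to the original pseudometric on `X`. -/
theorem graevSeminorm_single_sub_single {X : Type*} [PseudoMetricSpace X] (x y : X) :
    graevSeminorm (Finsupp.single x (1 : ℤ) - Finsupp.single y (1 : ℤ)) = dist x y := by
  have hmem : dist x y ∈ { r : ℝ | ∃ (k : ℕ) (c : Fin k → ℤ) (a b : Fin k → X),
      Finsupp.single x (1 : ℤ) - Finsupp.single y (1 : ℤ)
        = ∑ i, c i • (Finsupp.single (a i) (1 : ℤ) - Finsupp.single (b i) (1 : ℤ)) ∧
      r = ∑ i, |(c i : ℝ)| * dist (a i) (b i) } := by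
    exact ⟨1, fun _ => 1, fun _ => x, fun _ => y, by simp, by simp⟩
  apply le_antisymm
  · apply csInf_le _ hmem
    refine ⟨0, ?_⟩
    rintro r ⟨k, c, a, b, -, rfl⟩
    positivity
  · apply le_csInf ⟨_, hmem⟩
    rintro r ⟨k, c, a, b, hv, rfl⟩
    set φ : (X →₀ ℤ) →ₗ[ℤ] ℝ := Finsupp.linearCombination ℤ (fun z : X => dist z y) with hφ
    have h1 : φ (Finsupp.single x (1 : ℤ) - Finsupp.single y 1) = dist x y := by
      simp [hφ, Finsupp.linearCombination_single]
    have h2 : φ (Finsupp.single x (1 : ℤ) - Finsupp.single y 1)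
        = ∑ i, (c i : ℝ) * (dist (a i) y - dist (b i) y) := by
      rw [hv, map_sum]
      refine Finset.sum_congr rfl fun i _ => ?_
      rw [map_zsmul, map_sub]
      simp [hφ, Finsupp.linearCombination_single, zsmul_eq_mul, mul_sub]
    calc dist x y = ∑ i, (c i : ℝ) * (dist (a i) y - dist (b i) y) := by rw [← h1, h2]
      _ ≤ ∑ i, |(c i : ℝ)| * dist (a i) (b i) := by
          refine Finset.sum_le_sum fun i _ => ?_
          calc (c i : ℝ) * (dist (a i) y - dist (b i) y)
              ≤ |(c i : ℝ) * (dist (a i) y - dist (b i) y)| := le_abs_self _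
            _ = |(c i : ℝ)| * |dist (a i) y - dist (b i) y| := abs_mul _ _
            _ ≤ |(c i : ℝ)| * dist (a i) (b i) :=
                mul_le_mul_of_nonneg_left (abs_dist_sub_le _ _ _) (abs_nonneg _)
end

section
/- Let (X, d) be a pseudometric space, x₀ ∈ X, and δ > 0, and suppose d(x₀, y) ≥ δ for every y ∈ X with y ≠ x₀. Let v : X →₀ ℤ have coefficients summing to zero and satisfy v(x₀) ≠ 0. Then D(v) ≥ δ; that is, every representation v = Σᵢ cᵢ·(δ_{xᵢ} − δ_{yᵢ}) with integer coefficients satisfies Σᵢ |cᵢ|·d(xᵢ, yᵢ) ≥ δ. -/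
/-- If a point `x₀` is at distance at least `δ > 0` from every other point of `X`, then
any zero-sum element of the free abelian group whose support contains `x₀` has Graev
seminorm at least `δ`; indeed every integer-coefficient representation of it has cost
at least `δ`. -/
theorem graevSeminorm_ge_of_isolated {X : Type*} [PseudoMetricSpace X]
    (x₀ : X) (δ : ℝ) (hδ : 0 < δ) (hsep : ∀ y : X, y ≠ x₀ → δ ≤ dist x₀ y)
    (v : X →₀ ℤ) (hsum : v.sum (fun _ c => c) = 0) (hv : v x₀ ≠ 0) :
    δ ≤ graevSeminorm v ∧
      ∀ (k : ℕ) (c : Fin k → ℤ) (x y : Fin k → X),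
        v = ∑ i, c i • (Finsupp.single (x i) (1 : ℤ) - Finsupp.single (y i) (1 : ℤ)) →
        δ ≤ ∑ i, |(c i : ℝ)| * dist (x i) (y i) := by
  have key : ∀ (k : ℕ) (c : Fin k → ℤ) (x y : Fin k → X),
      v = ∑ i, c i • (Finsupp.single (x i) (1 : ℤ) - Finsupp.single (y i) (1 : ℤ)) →
      δ ≤ ∑ i, |(c i : ℝ)| * dist (x i) (y i) := by
    intro k c x y hrep
    classical
    have hval : v x₀ = ∑ i, c i *
        ((if x i = x₀ then (1:ℤ) else 0) - (if y i = x₀ then (1:ℤ) else 0)) := by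
      rw [hrep]
      simp [Finsupp.finset_sum_apply, Finsupp.single_apply, mul_sub]
    have hex : ∃ i, c i ≠ 0 ∧ ((x i = x₀) ↔ ¬ (y i = x₀)) := by
      by_contra h
      push_neg at h
      apply hv
      rw [hval]
      apply Finset.sum_eq_zero
      intro i _
      by_cases hc : c i = 0
      · simp [hc]
      · have hiff : (x i = x₀) ↔ (y i = x₀) := by
          have := h i hc; tauto
        by_cases hx : x i = x₀
        · simp [hx, hiff.mp hx]
        · have hy : y i ≠ x₀ := fun hh => hx (hiff.mpr hh)
          simp [hx, hy]
    obtain ⟨i, hci, hxy⟩ := hex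
    have hterm : δ ≤ |(c i : ℝ)| * dist (x i) (y i) := by
      have h1 : (1:ℝ) ≤ |(c i : ℝ)| := by
        rw [← Int.cast_abs]
        exact_mod_cast Int.one_le_abs hci
      have hd : δ ≤ dist (x i) (y i) := by
        by_cases hx : x i = x₀
        · have hy : y i ≠ x₀ := hxy.mp hx
          calc δ ≤ dist x₀ (y i) := hsep _ hy
            _ = dist (x i) (y i) := by rw [hx]
        · have hy : y i = x₀ := by tauto
          calc δ ≤ dist x₀ (x i) := hsep _ hx
            _ = dist (x i) (y i) := by rw [hy, dist_comm]
      calc δ = 1 * δ := (one_mul δ).symm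
        _ ≤ |(c i : ℝ)| * dist (x i) (y i) :=
          mul_le_mul h1 hd hδ.le (abs_nonneg _)
    refine hterm.trans (Finset.single_le_sum (f := fun i => |(c i : ℝ)| * dist (x i) (y i))
      (fun j _ => mul_nonneg (abs_nonneg _) dist_nonneg) (Finset.mem_univ i))
  refine ⟨?_, key⟩
  have hne : ∃ r, r ∈ { r : ℝ | ∃ (k : ℕ) (c : Fin k → ℤ) (x y : Fin k → X),
      v = ∑ i, c i • (Finsupp.single (x i) (1 : ℤ) - Finsupp.single (y i) (1 : ℤ)) ∧
      r = ∑ i, |(c i : ℝ)| * dist (x i) (y i) } := by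
    classical
    set s := v.support with hs
    set e := s.equivFin.symm
    refine ⟨_, s.card, fun i => v (e i), fun i => (e i : X), fun _ => x₀, ?_, rfl⟩
    have h1 : ∑ i, v (e i) • (Finsupp.single ((e i : X)) (1:ℤ)) = v := by
      rw [e.sum_comp (fun a => v (a : X) • Finsupp.single (a : X) (1:ℤ))]
      rw [Finset.sum_coe_sort s (fun a => v a • Finsupp.single a (1:ℤ))]
      simp_rw [Finsupp.smul_single, smul_eq_mul, mul_one]
      exact Finsupp.sum_single v
    have h2 : ∑ i, v (e i) • (Finsupp.single x₀ (1:ℤ)) = 0 := by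
      rw [← Finset.sum_smul]
      rw [e.sum_comp (fun a => v (a : X)),
        Finset.sum_coe_sort s (fun a => v a)]
      have : ∑ a ∈ s, v a = 0 := hsum
      rw [this, zero_smul]
    symm
    have h3 : ∑ i, v (e i) • (Finsupp.single ((e i : X)) (1:ℤ) - Finsupp.single x₀ (1:ℤ))
        = (∑ i, v (e i) • Finsupp.single ((e i : X)) (1:ℤ))
          - ∑ i, v (e i) • Finsupp.single x₀ (1:ℤ) := by
      simp [smul_sub, Finset.sum_sub_distrib]
    rw [h3, h1, h2, sub_zero]
  apply le_csInf hne
  rintro r ⟨k, c, x, y, hrep, rfl⟩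
  exact key k c x y hrep
end

section
/- Let Γ be a set and E = ℓ¹(Γ). Then every weakly compact subset K of E contains only finitely many of the standard unit vectors: the set {γ ∈ Γ : e_γ ∈ K} is finite, where e_γ denotes the family equal to 1 at γ and 0 elsewhere. -/
/-!
If infinitely many unit vectors `e_γ` lay in a weakly compact set, an ultrafilter finer than the
cofinite filter on those `γ` would make `e_γ` converge weakly to some `x`. Testing against the
coordinate functionals forces `x = 0`, while the summation functional, which is `1` on every
`e_γ`, forces `∑ γ, x γ = 1`.
-/

open Filter Topology

theorem tendsto_apply_of_tendsto_toWeakSpace {𝕜 E α : Type*} [CommSemiring 𝕜]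
    [TopologicalSpace 𝕜] [ContinuousAdd 𝕜] [ContinuousConstSMul 𝕜 𝕜] [AddCommMonoid E]
    [Module 𝕜 E] [TopologicalSpace E] {l : Filter α} {f : α → E} {x : E}
    (h : Tendsto (fun i => toWeakSpace 𝕜 E (f i)) l (𝓝 (toWeakSpace 𝕜 E x))) (φ : E →L[𝕜] 𝕜) :
    Tendsto (fun i => φ (f i)) l (𝓝 (φ x)) :=
  ((WeakBilin.eval_continuous _ φ).tendsto _).comp h

theorem IsCompact.finite_preimage_of_forall_not_tendsto {Γ X : Type*} [TopologicalSpace X]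
    {K : Set X} (hK : IsCompact K) {f : Γ → X}
    (hf : ∀ (U : Ultrafilter Γ) (x : X), (U : Filter Γ) ≤ cofinite → ¬Tendsto f U (𝓝 x)) :
    (f ⁻¹' K).Finite := by
  by_contra! hinf
  have : (cofinite ⊓ 𝓟 (f ⁻¹' K)).NeBot := hinf.cofinite_inf_principal_neBot
  have hU := le_inf_iff.mp (Ultrafilter.of_le (cofinite ⊓ 𝓟 (f ⁻¹' K)))
  obtain ⟨x, -, hx⟩ := hK.ultrafilter_le_nhds (.map f (.of _)) (by simpa using hU.2)
  exact hf _ x hU.1 hx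

namespace lp

variable {𝕜 Γ : Type*} [NormedField 𝕜] [CompleteSpace 𝕜] [DecidableEq Γ]

theorem not_tendsto_toWeakSpace_single_one {l : Filter Γ} [l.NeBot] (hl : l ≤ cofinite)
    (x : lp (fun _ : Γ => 𝕜) 1) :
    ¬Tendsto (fun γ => toWeakSpace 𝕜 _ (lp.single 1 γ (1 : 𝕜))) l (𝓝 (toWeakSpace 𝕜 _ x)) := by
  intro h
  have hx_zero : x = 0 := by
    ext γ₀
    have hcoord := tendsto_apply_of_tendsto_toWeakSpace h (evalCLM 𝕜 _ 1 γ₀)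
    have hsingle : ∀ᶠ γ in l, evalCLM 𝕜 _ 1 γ₀ (lp.single (E := fun _ : Γ => 𝕜) 1 γ 1) = 0 := by
      filter_upwards [hl (Set.finite_singleton γ₀).compl_mem_cofinite] with γ hγ
      simp [evalCLM, lp.single_apply, Ne.symm hγ]
    exact tendsto_nhds_unique hcoord (tendsto_const_nhds.congr' (hsingle.mono fun _ h => h.symm))
  have hsum : Tendsto (fun _ => (1 : 𝕜)) l (𝓝 (∑' γ, x γ)) := by
    simpa [lp.single_apply] using tendsto_apply_of_tendsto_toWeakSpace h (tsumCLM 𝕜 Γ 𝕜)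
  have hx_sum : ∑' γ, x γ = 1 := tendsto_nhds_unique hsum tendsto_const_nhds
  simp [hx_zero] at hx_sum

end lp

/-- Every weakly compact subset of `ℓ¹(Γ)` contains only finitely many of the standard
unit vectors. -/
theorem finite_unitVectors_mem_weaklyCompact (Γ : Type*) [DecidableEq Γ]
    (K : Set (lp (fun _ : Γ => ℝ) 1))
    (hK : IsCompact (toWeakSpace ℝ (lp (fun _ : Γ => ℝ) 1) '' K)) :
    {γ : Γ | lp.single 1 γ (1 : ℝ) ∈ K}.Finite := by
  have hpreimage : {γ : Γ | lp.single 1 γ (1 : ℝ) ∈ K} =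
      (fun γ => toWeakSpace ℝ _ (lp.single 1 γ (1 : ℝ))) ⁻¹' (toWeakSpace ℝ _ '' K) := by
    ext γ
    simp [(toWeakSpace ℝ (lp (fun _ : Γ => ℝ) 1)).injective.mem_set_image]
  rw [hpreimage]
  refine hK.finite_preimage_of_forall_not_tendsto fun U x hU => ?_
  simpa using lp.not_tendsto_toWeakSpace_single_one hU ((toWeakSpace ℝ _).symm x)
end
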